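/- arXiv:1212.6756 — 7 statements merged into one kernel-verified Lean document; each statement's English description precedes it below -/
import Mathlib

section
/- For any hypergraph H, the separation dimension of H equals the boxicity of the line graph of H, i.e., π(H) = boxicity(L(H)). -/
/-- A permutation `σ` separates two finsets `A`, `B`: all of `A` comes before
all of `B`, or vice versa. -/
def SepF {V : Type*} {n : ℕ} (σ : V ≃ Fin n) (A B : Finset V) : Prop :=
  (∀ a ∈ A, ∀ b ∈ B, σ a < σ b) ∨ (∀ a ∈ A, ∀ b ∈ B, σ b < σ a)

/-- The separation dimension of a hypergraph with edge family `E`: the minimum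
size of a family of permutations of the vertex set separating every pair of
disjoint edges. -/
noncomputable def sepDimH {V : Type*} [Fintype V] (E : Finset (Finset V)) : ℕ :=
  sInf {k : ℕ | ∃ F : Fin k → (V ≃ Fin (Fintype.card V)),
    ∀ e ∈ E, ∀ f ∈ E, e ≠ f → Disjoint e f → ∃ i, SepF (F i) e f}

/-- `l`, `r` give an axis-parallel `k`-box representation of `G`. -/
def IsBoxRep {W : Type*} (G : SimpleGraph W) (k : ℕ)
    (l r : W → Fin k → ℝ) : Prop :=
  (∀ v i, l v i ≤ r v i) ∧
  ∀ u v : W, u ≠ v →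
    (G.Adj u v ↔ ∀ i, max (l u i) (l v i) ≤ min (r u i) (r v i))

/-- The boxicity of a graph: the least `k` admitting a `k`-box representation. -/
noncomputable def boxicity {W : Type*} (G : SimpleGraph W) : ℕ :=
  sInf {k : ℕ | ∃ l r : W → Fin k → ℝ, IsBoxRep G k l r}


/-!
A family of `k` permutations separating disjoint edges gives a `k`-box representation of the
line graph: in coordinate `i` the box of an edge is the hull of its positions under the `i`-th
permutation, so intersecting edges get overlapping intervals and separated edges disjoint ones.
Conversely, from a `k`-box representation, coordinate `i` yields a permutation by sorting the
vertices by the largest left endpoint among the edges containing them. If the interval of `e`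
lies entirely to the left of that of `f`, every vertex of `e` gets a key at most `r e`, because
all edges through it meet `e`, and every vertex of `f` a key at least `l f`.
-/

lemma exists_equiv_fin_lt_of_lt {V α : Type*} [Fintype V] [LinearOrder α] (m : V → α) :
    ∃ σ : V ≃ Fin (Fintype.card V), ∀ u w, m u < m w → σ u < σ w := by
  let e₀ := Fintype.equivFin V
  let τ := Tuple.sort (m ∘ e₀.symm)
  refine ⟨e₀.trans τ.symm, fun u w h => (Tuple.monotone_sort (m ∘ e₀.symm)).reflect_lt ?_⟩
  simpa [τ] using h

lemma max_le_min_iff_of_le {α : Type*} [LinearOrder α] {a b c d : α} (hac : a ≤ c)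
    (hbd : b ≤ d) : max a b ≤ min c d ↔ a ≤ d ∧ b ≤ c := by
  simp only [max_le_iff, le_min_iff]
  tauto

section Hull

variable {V : Type*} (g : V → ℝ)

/-- `[hullLo g e, hullHi g e]` is the interval hull of `g` on `e`; the empty set gets `[-1, -1]`,
left of every nonnegative `g`. -/
noncomputable def hullLo (e : Finset V) : ℝ := if h : e.Nonempty then e.inf' h g else -1

noncomputable def hullHi (e : Finset V) : ℝ := if h : e.Nonempty then e.sup' h g else -1

lemma hullLo_le_of_mem {e : Finset V} {v : V} (hv : v ∈ e) : hullLo g e ≤ g v := by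
  rw [hullLo, dif_pos ⟨v, hv⟩]
  exact Finset.inf'_le g hv

lemma le_hullHi_of_mem {e : Finset V} {v : V} (hv : v ∈ e) : g v ≤ hullHi g e := by
  rw [hullHi, dif_pos ⟨v, hv⟩]
  exact Finset.le_sup' g hv

variable {g}

lemma hullLo_le_hullHi (e : Finset V) : hullLo g e ≤ hullHi g e := by
  rcases e.eq_empty_or_nonempty with rfl | ⟨v, hv⟩
  · simp [hullLo, hullHi]
  · exact (hullLo_le_of_mem g hv).trans (le_hullHi_of_mem g hv)

lemma hullHi_lt_hullLo (hg : ∀ v, 0 ≤ g v) {e f : Finset V} (hf : f.Nonempty)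
    (hsep : ∀ a ∈ e, ∀ b ∈ f, g a < g b) : hullHi g e < hullLo g f := by
  rw [hullLo, dif_pos hf, Finset.lt_inf'_iff]
  intro b hb
  rcases e.eq_empty_or_nonempty with rfl | he
  · simpa [hullHi] using (hg b).trans_lt' (by norm_num)
  · rw [hullHi, dif_pos he, Finset.sup'_lt_iff]
    exact fun a ha => hsep a ha b hb

lemma hullHi_lt_hullLo_or_of_ne (hg : ∀ v, 0 ≤ g v) {e f : Finset V} (hef : e ≠ f)
    (hsep : ∀ a ∈ e, ∀ b ∈ f, g a < g b) :
    hullHi g e < hullLo g f ∨ hullHi g f < hullLo g e := by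
  rcases f.eq_empty_or_nonempty with rfl | hf
  · refine Or.inr (hullHi_lt_hullLo hg (Finset.nonempty_iff_ne_empty.2 hef) ?_)
    simp
  · exact Or.inl (hullHi_lt_hullLo hg hf hsep)

end Hull

section LineGraph

variable {V : Type*} [Fintype V] {E : Finset (Finset V)}
  {L : SimpleGraph {e : Finset V // e ∈ E}}

lemma isBoxRep_hull (hL : ∀ e f : {e : Finset V // e ∈ E},
      L.Adj e f ↔ e ≠ f ∧ ¬ Disjoint e.1 f.1)
    {k : ℕ} (F : Fin k → (V ≃ Fin (Fintype.card V)))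
    (hF : ∀ e ∈ E, ∀ f ∈ E, e ≠ f → Disjoint e f → ∃ i, SepF (F i) e f) :
    IsBoxRep L k (fun e i => hullLo (fun v => (F i v : ℝ)) e.1)
      (fun e i => hullHi (fun v => (F i v : ℝ)) e.1) := by
  refine ⟨fun e i => hullLo_le_hullHi e.1, fun e f hef => ?_⟩
  have hval : e.1 ≠ f.1 := fun h => hef (Subtype.ext h)
  simp only [hL, hef, ne_eq, not_false_eq_true, true_and,
    max_le_min_iff_of_le (hullLo_le_hullHi _) (hullLo_le_hullHi _)]
  constructor
  · intro hmeet i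
    obtain ⟨v, hve, hvf⟩ := Finset.not_disjoint_iff.1 hmeet
    set g : V → ℝ := fun x => (F i x : ℝ)
    exact ⟨(hullLo_le_of_mem g hve).trans (le_hullHi_of_mem g hvf),
      (hullLo_le_of_mem g hvf).trans (le_hullHi_of_mem g hve)⟩
  · intro hover hdisj
    obtain ⟨i, hsep⟩ := hF e.1 e.2 f.1 f.2 hval hdisj
    set g : V → ℝ := fun x => (F i x : ℝ)
    have hg : ∀ v, 0 ≤ g v := fun v => Nat.cast_nonneg _
    have hlt : ∀ {a b}, F i a < F i b → g a < g b := fun h => by simpa [g] using h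
    have hgap : hullHi g e.1 < hullLo g f.1 ∨ hullHi g f.1 < hullLo g e.1 := by
      rcases hsep with h | h
      · exact hullHi_lt_hullLo_or_of_ne hg hval fun a ha b hb => hlt (h a ha b hb)
      · exact (hullHi_lt_hullLo_or_of_ne hg hval.symm fun b hb a ha => hlt (h a ha b hb)).symm
    obtain ⟨h₁, h₂⟩ := hover i
    rcases hgap with h | h <;> linarith

lemma exists_equiv_separating_of_intervals {W : Type*} [Fintype W] (S : W → Finset V)
    (l r : W → ℝ) (hov : ∀ a b, ¬ Disjoint (S a) (S b) → l a ≤ r b) :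
    ∃ σ : V ≃ Fin (Fintype.card V),
      ∀ a b, r a < l b → ∀ u ∈ S a, ∀ w ∈ S b, σ u < σ w := by
  classical
  let key : V → WithBot ℝ := fun v => ({a | v ∈ S a} : Finset W).sup fun a => (l a : WithBot ℝ)
  obtain ⟨σ, hσ⟩ := exists_equiv_fin_lt_of_lt key
  refine ⟨σ, fun a b hab u hu w hw => hσ u w ?_⟩
  have hkey_u : key u ≤ r a := Finset.sup_le fun c hc =>
    WithBot.coe_le_coe.2 (hov c a (Finset.not_disjoint_iff.2 ⟨u, (Finset.mem_filter.1 hc).2, hu⟩))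
  have hkey_w : (l b : WithBot ℝ) ≤ key w :=
    Finset.le_sup (f := fun a => (l a : WithBot ℝ)) (Finset.mem_filter.2 ⟨Finset.mem_univ _, hw⟩)
  exact hkey_u.trans_lt ((WithBot.coe_lt_coe.2 hab).trans_le hkey_w)

lemma exists_separating_of_isBoxRep (hL : ∀ e f : {e : Finset V // e ∈ E},
      L.Adj e f ↔ e ≠ f ∧ ¬ Disjoint e.1 f.1)
    {k : ℕ} {l r : {e : Finset V // e ∈ E} → Fin k → ℝ} (hbox : IsBoxRep L k l r) :
    ∃ F : Fin k → (V ≃ Fin (Fintype.card V)),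
      ∀ e ∈ E, ∀ f ∈ E, e ≠ f → Disjoint e f → ∃ i, SepF (F i) e f := by
  have hov : ∀ i (a b : {e : Finset V // e ∈ E}), ¬ Disjoint a.1 b.1 → l a i ≤ r b i := by
    intro i a b hab
    by_cases hne : a = b
    · exact hne ▸ hbox.1 a i
    · have hmeet := (hbox.2 a b hne).1 ((hL a b).2 ⟨hne, hab⟩) i
      exact ((max_le_min_iff_of_le (hbox.1 a i) (hbox.1 b i)).1 hmeet).1
  choose F hF using fun i =>
    exists_equiv_separating_of_intervals Subtype.val (l · i) (r · i) (hov i)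
  refine ⟨F, fun e he f hf hef hdisj => ?_⟩
  have hne : (⟨e, he⟩ : {e : Finset V // e ∈ E}) ≠ ⟨f, hf⟩ := fun h => hef (congrArg Subtype.val h)
  have hnadj : ¬ L.Adj ⟨e, he⟩ ⟨f, hf⟩ := fun hadj => ((hL _ _).1 hadj).2 hdisj
  rw [hbox.2 _ _ hne, not_forall] at hnadj
  obtain ⟨i, hi⟩ := hnadj
  rw [max_le_min_iff_of_le (hbox.1 _ i) (hbox.1 _ i), not_and_or, not_le, not_le] at hi
  exact ⟨i, hi.symm.imp (hF i _ _) fun h a ha b hb => hF i _ _ h b hb a ha⟩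

end LineGraph

theorem stmt1_general {V : Type*} [Fintype V] (E : Finset (Finset V))
    (L : SimpleGraph {e : Finset V // e ∈ E})
    (hL : ∀ e f : {e : Finset V // e ∈ E},
      L.Adj e f ↔ e ≠ f ∧ ¬ Disjoint e.1 f.1) :
    sepDimH E = boxicity L := by
  unfold sepDimH boxicity
  congr 1
  ext k
  exact ⟨fun ⟨F, hF⟩ => ⟨_, _, isBoxRep_hull hL F hF⟩,
    fun ⟨_, _, hbox⟩ => exists_separating_of_isBoxRep hL hbox⟩

/-- For any hypergraph `H`, the separation dimension of `H` equals the boxicity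
of the line graph of `H` (whose vertices are the edges of `H`, two of them
adjacent iff they intersect). -/
theorem stmt1 {V : Type*} [Fintype V] [DecidableEq V] (E : Finset (Finset V))
    (L : SimpleGraph {e : Finset V // e ∈ E})
    (hL : ∀ e f : {e : Finset V // e ∈ E},
      L.Adj e f ↔ e ≠ f ∧ ¬ Disjoint e.1 f.1) :
    sepDimH E = boxicity L :=
  stmt1_general E L hL
end

section
/- For any rank-r hypergraph H on n vertices, π(H) ≤ (e·ln 2/(π√2)) · 4^r · √r · log₂ n. -/
/-!
For disjoint edges `e`, `f` with `|e| = a` and `|f| = b`, composing a bijection `σ : V ≃ Fin n`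
with a rearrangement of `σ(e ∪ f)` that moves `σ(e)` below `σ(f)` is an at most
`C(a + b, a)`-to-one map onto the bijections that put `e` before `f`. Hence a uniformly random
bijection separates `e` and `f` with probability at least `p = 2 / C(2r, r)`, and `k`
independent ones all fail with probability at most `(1 - p)^k ≤ exp(-pk)`. A union bound over
the at most `n^(2r) / 2` unordered pairs of edges gives a separating family of size `k` as soon
as `n^(2r) (1 - p)^k < 2`, and the elementary estimate `C(2r, r)^2 (3r + 1) ≤ 16^r` shows that
`k = ⌊(e ln 2 / (π √2)) 4^r √r log₂ n⌋` is enough.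
-/

open Finset Equiv Real

theorem Finset.exists_perm_lt_of_disjoint {α : Type*} [LinearOrder α] {s t : Finset α}
    (hst : Disjoint s t) :
    ∃ g : Perm α, {x | g x ≠ x} ⊆ ↑(s ∪ t) ∧ ∀ x ∈ s, ∀ y ∈ t, g x < g y := by
  let ρ : Perm ↥(s ∪ t) :=
    (Equiv.Finset.union s t hst).symm.trans <| (s.equivFin.sumCongr t.equivFin).trans <|
      finSumFinEquiv.trans ((s ∪ t).orderIsoOfFin (card_union_of_disjoint hst)).toEquiv
  refine ⟨Perm.ofSubtype ρ, fun x hx => ?_, fun x hx y hy => ?_⟩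
  · by_contra hxst
    exact hx (Perm.ofSubtype_apply_of_not_mem ρ hxst)
  rw [Perm.ofSubtype_apply_of_mem ρ (mem_union_left t hx),
    Perm.ofSubtype_apply_of_mem ρ (mem_union_right s hy)]
  simp [ρ, Equiv.Finset.union_symm_left hst hx, Equiv.Finset.union_symm_right hst hy, Fin.lt_def]
  omega

section Rearrangement

variable {V α : Type*} [Fintype V] [DecidableEq V] [Fintype α] [LinearOrder α]
  {e f : Finset V}

theorem Equiv.card_filter_trans_eq_le_choose {g : Finset α → Finset α → Perm α}
    (hg : ∀ s t, Disjoint s t → {x | g s t x ≠ x} ⊆ ↑(s ∪ t)) (hef : Disjoint e f)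
    (τ : V ≃ α) :
    #{σ : V ≃ α | σ.trans (g (e.image σ) (f.image σ)) = τ} ≤ (#e + #f).choose #e := by
  have hdisj (σ : V ≃ α) : Disjoint (e.image σ) (f.image σ) :=
    (disjoint_image σ.injective).2 hef
  have himage (σ : V ≃ α) :
      (e ∪ f).image (σ.trans (g (e.image σ) (f.image σ))) = (e ∪ f).image σ := by
    rw [coe_trans, ← image_image, image_union]
    simpa [map_eq_image] using map_perm (hg _ _ (hdisj σ))
  -- `σ` is recovered from `τ` and `σ(e) ⊆ τ(e ∪ f)`, as `g` sees `σ` only through `σ(e), σ(f)`.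
  calc #{σ : V ≃ α | σ.trans (g (e.image σ) (f.image σ)) = τ}
      ≤ #(((e ∪ f).image τ).powersetCard #e) := by
        refine card_le_card_of_injOn (fun σ => e.image σ) (fun σ hσ => ?_) ?_
        · rw [mem_coe, mem_filter_univ] at hσ
          rw [mem_coe, mem_powersetCard, ← hσ, himage]
          exact ⟨image_subset_image subset_union_left, card_image_of_injective _ σ.injective⟩
        intro σ₁ hσ₁ σ₂ hσ₂ (he : e.image σ₁ = e.image σ₂)
        rw [mem_coe, mem_filter_univ] at hσ₁ hσ₂
        have hu : e.image σ₁ ∪ f.image σ₁ = e.image σ₂ ∪ f.image σ₂ := by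
          rw [← image_union, ← image_union, ← himage σ₁, ← himage σ₂, hσ₁, hσ₂]
        have hf : f.image σ₁ = f.image σ₂ := by
          rw [← union_sdiff_cancel_left (hdisj σ₁), ← union_sdiff_cancel_left (hdisj σ₂),
            hu, he]
        have h₁₂ := hσ₁.trans hσ₂.symm
        simp only [he, hf] at h₁₂
        ext x
        exact (g _ _).injective (DFunLike.congr_fun h₁₂ x)
    _ = (#e + #f).choose #e := by
        rw [card_powersetCard, card_image_of_injective _ τ.injective, card_union_of_disjoint hef]

theorem Equiv.card_le_choose_mul_card_filter_forall_lt (hef : Disjoint e f) :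
    Fintype.card (V ≃ α) ≤
      (#e + #f).choose #e * #{σ : V ≃ α | ∀ x ∈ e, ∀ y ∈ f, σ x < σ y} := by
  choose g hg using fun s t : Finset α =>
    if hst : Disjoint s t then (exists_perm_lt_of_disjoint hst).imp fun _ h _ => h
    else ⟨1, fun h => (hst h).elim⟩
  let Φ (σ : V ≃ α) : V ≃ α := σ.trans (g (e.image σ) (f.image σ))
  have hdisj (σ : V ≃ α) : Disjoint (e.image σ) (f.image σ) :=
    (disjoint_image σ.injective).2 hef
  calc Fintype.card (V ≃ α) = #(univ : Finset (V ≃ α)) := card_univ.symm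
    _ ≤ (#e + #f).choose #e * #(univ.image Φ) :=
        card_le_mul_card_image _ _ fun τ _ =>
          card_filter_trans_eq_le_choose (fun s t hst => (hg s t hst).1) hef τ
    _ ≤ _ := by
        gcongr
        intro τ hτ
        obtain ⟨σ, -, rfl⟩ := mem_image.1 hτ
        refine mem_filter.2 ⟨mem_univ _, fun x hx y hy => ?_⟩
        exact (hg _ _ (hdisj σ)).2 _ (mem_image_of_mem σ hx) _ (mem_image_of_mem σ hy)

end Rearrangement

instance {V : Type*} {n : ℕ} (σ : V ≃ Fin n) (A B : Finset V) : Decidable (SepF σ A B) :=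
  inferInstanceAs (Decidable (_ ∨ _))

theorem SepF.symm {V : Type*} {n : ℕ} {σ : V ≃ Fin n} {A B : Finset V} (h : SepF σ A B) :
    SepF σ B A :=
  (Or.symm h).imp (fun h b hb a ha => h a ha b hb) (fun h b hb a ha => h a ha b hb)

theorem sepF_comm {V : Type*} {n : ℕ} (σ : V ≃ Fin n) (A B : Finset V) :
    SepF σ A B ↔ SepF σ B A :=
  ⟨SepF.symm, SepF.symm⟩

section Counting

variable {V : Type*} [Fintype V] [DecidableEq V] {n r : ℕ} {e f : Finset V}

theorem two_mul_card_le_centralBinom_mul_card_sepF (he : e.Nonempty) (hf : f.Nonempty)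
    (hef : Disjoint e f) (her : #e ≤ r) (hfr : #f ≤ r) :
    2 * Fintype.card (V ≃ Fin n) ≤ r.centralBinom * #{σ : V ≃ Fin n | SepF σ e f} := by
  have hchoose : (#e + #f).choose #e ≤ r.centralBinom :=
    (Nat.choose_le_choose _ (by omega : #e + #f ≤ 2 * r)).trans (Nat.choose_le_centralBinom _ _)
  have hfwd := Equiv.card_le_choose_mul_card_filter_forall_lt (α := Fin n) hef
  have hbwd := Equiv.card_le_choose_mul_card_filter_forall_lt (α := Fin n) hef.symm
  rw [add_comm, ← Nat.choose_symm_add] at hbwd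
  obtain ⟨x, hx⟩ := he
  obtain ⟨y, hy⟩ := hf
  have hsplit : #{σ : V ≃ Fin n | ∀ a ∈ e, ∀ b ∈ f, σ a < σ b} +
      #{σ : V ≃ Fin n | ∀ b ∈ f, ∀ a ∈ e, σ b < σ a} ≤
        #{σ : V ≃ Fin n | SepF σ e f} := by
    rw [← card_union_of_disjoint]
    · refine card_le_card fun σ hσ => ?_
      simp only [mem_union, mem_filter, mem_univ, true_and] at hσ ⊢
      exact hσ.imp id fun h a ha b hb => h b hb a ha
    · refine disjoint_filter.2 fun σ _ hlt hgt => ?_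
      exact (hlt x hx y hy).not_gt (hgt y hy x hx)
  calc 2 * Fintype.card (V ≃ Fin n)
      ≤ (#e + #f).choose #e * (#{σ : V ≃ Fin n | ∀ a ∈ e, ∀ b ∈ f, σ a < σ b} +
          #{σ : V ≃ Fin n | ∀ b ∈ f, ∀ a ∈ e, σ b < σ a}) := by linarith
    _ ≤ r.centralBinom * #{σ : V ≃ Fin n | SepF σ e f} := Nat.mul_le_mul hchoose hsplit

theorem card_not_sepF_le (he : e.Nonempty) (hf : f.Nonempty) (hef : Disjoint e f)
    (her : #e ≤ r) (hfr : #f ≤ r) :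
    (#{σ : V ≃ Fin n | ¬SepF σ e f} : ℝ) ≤
      Fintype.card (V ≃ Fin n) * (1 - 2 / r.centralBinom) := by
  have hcount : (2 * Fintype.card (V ≃ Fin n) : ℝ) ≤
      r.centralBinom * #{σ : V ≃ Fin n | SepF σ e f} := by
    exact_mod_cast two_mul_card_le_centralBinom_mul_card_sepF he hf hef her hfr
  have hsum : (#{σ : V ≃ Fin n | SepF σ e f} + #{σ : V ≃ Fin n | ¬SepF σ e f} : ℝ) =
      Fintype.card (V ≃ Fin n) := by
    exact_mod_cast card_filter_add_card_filter_not _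
  have hC : (0 : ℝ) < r.centralBinom := by exact_mod_cast r.centralBinom_pos
  have hsep : 2 * Fintype.card (V ≃ Fin n) / (r.centralBinom : ℝ) ≤
      #{σ : V ≃ Fin n | SepF σ e f} := by
    rw [div_le_iff₀ hC]
    linarith
  calc (#{σ : V ≃ Fin n | ¬SepF σ e f} : ℝ)
      = Fintype.card (V ≃ Fin n) - #{σ : V ≃ Fin n | SepF σ e f} := by linarith
    _ ≤ Fintype.card (V ≃ Fin n) - 2 * Fintype.card (V ≃ Fin n) / (r.centralBinom : ℝ) := by
        linarith
    _ = Fintype.card (V ≃ Fin n) * (1 - 2 / r.centralBinom) := by ring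

theorem card_forall_not_sepF_le {k : ℕ} (he : e.Nonempty) (hf : f.Nonempty)
    (hef : Disjoint e f) (her : #e ≤ r) (hfr : #f ≤ r) :
    (#{F : Fin k → V ≃ Fin n | ∀ i, ¬SepF (F i) e f} : ℝ) ≤
      (Fintype.card (V ≃ Fin n) * (1 - 2 / r.centralBinom)) ^ k := by
  have hpi : ({F : Fin k → V ≃ Fin n | ∀ i, ¬SepF (F i) e f} : Finset _) =
      Fintype.piFinset fun _ => {σ : V ≃ Fin n | ¬SepF σ e f} := by
    ext
    simp [Fintype.mem_piFinset]
  rw [hpi, Fintype.card_piFinset, prod_const, card_univ, Fintype.card_fin, Nat.cast_pow]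
  exact pow_le_pow_left₀ (Nat.cast_nonneg _) (card_not_sepF_le he hf hef her hfr) k

end Counting

theorem Finset.exists_image_univ_eq {V : Type*} [DecidableEq V] {r : ℕ} {e : Finset V}
    (he : e.Nonempty) (her : #e ≤ r) : ∃ g : Fin r → V, univ.image g = e := by
  obtain ⟨x, hx⟩ := he
  obtain ⟨g, hg⟩ : ∃ g : Fin r → e, Function.Surjective g :=
    Function.exists_surjective_iff.2
      ⟨⟨fun _ => ⟨x, hx⟩⟩, Function.Embedding.nonempty_of_card_le (by simpa using her)⟩
  refine ⟨Subtype.val ∘ g, ?_⟩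
  ext y
  simp only [mem_image, mem_univ, true_and, Function.comp_apply]
  exact ⟨fun ⟨i, hi⟩ => hi ▸ (g i).2,
    fun hy => (hg ⟨y, hy⟩).imp fun i hi => by rw [hi]⟩

theorem Finset.card_le_card_pow_of_forall_nonempty {V : Type*} [Fintype V] [DecidableEq V]
    {E : Finset (Finset V)} {r : ℕ} (hne : ∀ e ∈ E, e.Nonempty)
    (hrank : ∀ e ∈ E, #e ≤ r) :
    #E ≤ Fintype.card V ^ r :=
  calc #E ≤ #((univ : Finset (Fin r → V)).image fun g => univ.image g) := by
        refine card_le_card fun e he => ?_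
        obtain ⟨g, hg⟩ := exists_image_univ_eq (hne e he) (hrank e he)
        exact mem_image.2 ⟨g, mem_univ _, hg⟩
    _ ≤ #(univ : Finset (Fin r → V)) := card_image_le
    _ = Fintype.card V ^ r := by simp

def IsSeparatingFamily {V : Type*} {k n : ℕ} (F : Fin k → V ≃ Fin n) (E : Finset (Finset V)) :
    Prop :=
  ∀ e ∈ E, ∀ f ∈ E, e ≠ f → Disjoint e f → ∃ i, SepF (F i) e f

theorem sepDimH_le_of_isSeparatingFamily {V : Type*} [Fintype V] {E : Finset (Finset V)} {k : ℕ}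
    {F : Fin k → V ≃ Fin (Fintype.card V)} (hF : IsSeparatingFamily F E) : sepDimH E ≤ k :=
  Nat.sInf_le ⟨F, hF⟩

theorem card_image_offDiag_le {V : Type*} [Fintype V] [DecidableEq V] {E : Finset (Finset V)}
    {r : ℕ} (hne : ∀ e ∈ E, e.Nonempty) (hrank : ∀ e ∈ E, #e ≤ r) :
    (#(E.offDiag.image (Function.uncurry Sym2.mk)) : ℝ) ≤
      (Fintype.card V : ℝ) ^ (2 * r) / 2 := by
  have hE : (#E : ℝ) ≤ (Fintype.card V : ℝ) ^ r := by
    exact_mod_cast card_le_card_pow_of_forall_nonempty hne hrank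
  rw [Sym2.card_image_offDiag, Nat.cast_choose_two, pow_mul']
  gcongr
  nlinarith [(#E).cast_nonneg (α := ℝ)]

theorem one_sub_two_div_centralBinom_nonneg {r : ℕ} (hr : 0 < r) :
    0 ≤ 1 - 2 / (r.centralBinom : ℝ) := by
  have : (2 : ℝ) ≤ r.centralBinom := by exact_mod_cast Nat.two_le_centralBinom r hr
  rw [sub_nonneg, div_le_one (by positivity)]
  exact this

def unseparatedFamilies {V : Type*} [Fintype V] [DecidableEq V] (k n : ℕ) :
    Sym2 (Finset V) → Finset (Fin k → V ≃ Fin n) :=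
  Sym2.lift ⟨fun e f => {F | Disjoint e f ∧ ∀ i, ¬SepF (F i) e f}, fun e f => by
    simp only [disjoint_comm, sepF_comm _ e f]⟩

@[simp]
theorem unseparatedFamilies_mk {V : Type*} [Fintype V] [DecidableEq V] (k n : ℕ)
    (e f : Finset V) :
    unseparatedFamilies k n s(e, f) =
      ({F | Disjoint e f ∧ ∀ i, ¬SepF (F i) e f} : Finset (Fin k → V ≃ Fin n)) :=
  rfl

theorem card_unseparatedFamilies_le {V : Type*} [Fintype V] [DecidableEq V] {k n r : ℕ}
    {e f : Finset V} (he : e.Nonempty) (hf : f.Nonempty) (her : #e ≤ r) (hfr : #f ≤ r) :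
    (#(unseparatedFamilies k n s(e, f)) : ℝ) ≤
      (Fintype.card (V ≃ Fin n) * (1 - 2 / r.centralBinom)) ^ k := by
  by_cases hef : Disjoint e f
  · refine le_trans ?_ (card_forall_not_sepF_le he hf hef her hfr)
    rw [unseparatedFamilies_mk]
    exact_mod_cast card_le_card (monotone_filter_right _ fun _ _ => And.right)
  · have := one_sub_two_div_centralBinom_nonneg (he.card_pos.trans_le her)
    simp only [unseparatedFamilies_mk, hef, false_and, filter_false, card_empty, Nat.cast_zero]
    positivity

theorem exists_isSeparatingFamily {V : Type*} [Fintype V] [DecidableEq V]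
    {E : Finset (Finset V)} {r k : ℕ} (hne : ∀ e ∈ E, e.Nonempty)
    (hrank : ∀ e ∈ E, #e ≤ r)
    (hsmall : (Fintype.card V : ℝ) ^ (2 * r) * (1 - 2 / r.centralBinom) ^ k < 2) :
    ∃ F : Fin k → V ≃ Fin (Fintype.card V), IsSeparatingFamily F E := by
  rcases Nat.eq_zero_or_pos r with rfl | hr
  · refine ⟨fun _ => Fintype.equivFin V, fun e he => ?_⟩
    have := (hne e he).card_pos
    have := hrank e he
    omega
  set n := Fintype.card V
  set N := Fintype.card (V ≃ Fin n)
  set p : ℝ := 2 / r.centralBinom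
  have hp : 0 ≤ 1 - p := one_sub_two_div_centralBinom_nonneg hr
  have hN : (0 : ℝ) < N := by exact_mod_cast Fintype.card_pos_iff.2 ⟨Fintype.equivFin V⟩
  -- A union bound over unordered pairs: ordered pairs would lose the factor `2` needed here.
  let Z := E.offDiag.image (Function.uncurry Sym2.mk)
  have hbad : ∀ z ∈ Z, (#(unseparatedFamilies k n z) : ℝ) ≤ (N * (1 - p)) ^ k := by
    intro z hz
    obtain ⟨⟨e, f⟩, hef, rfl⟩ := mem_image.1 hz
    obtain ⟨he, hf, -⟩ := mem_offDiag.1 hef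
    exact card_unseparatedFamilies_le (hne e he) (hne f hf) (hrank e he) (hrank f hf)
  have hunion :
      (#(Z.biUnion (unseparatedFamilies k n)) : ℝ) < #(univ : Finset (Fin k → V ≃ Fin n)) :=
    calc (#(Z.biUnion (unseparatedFamilies k n)) : ℝ)
        ≤ ∑ z ∈ Z, (#(unseparatedFamilies k n z) : ℝ) := by exact_mod_cast card_biUnion_le
      _ ≤ #Z * ((N : ℝ) * (1 - p)) ^ k := by simpa using sum_le_sum hbad
      _ = #Z * (1 - p) ^ k * N ^ k := by rw [mul_pow]; ring
      _ ≤ (n : ℝ) ^ (2 * r) / 2 * (1 - p) ^ k * N ^ k := by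
          gcongr
          exact card_image_offDiag_le hne hrank
      _ < N ^ k := by nlinarith [pow_pos hN k]
      _ = #(univ : Finset (Fin k → V ≃ Fin n)) := by simp [N]
  obtain ⟨F, -, hF⟩ := exists_mem_notMem_of_card_lt_card (by exact_mod_cast hunion)
  refine ⟨F, fun e he f hf hef hd => ?_⟩
  by_contra! hsep
  have hz : s(e, f) ∈ Z := mem_image_of_mem (Function.uncurry Sym2.mk)
    (mem_offDiag.2 ⟨he, hf, hef⟩ : (e, f) ∈ E.offDiag)
  exact hF (mem_biUnion.2 ⟨_, hz, by simp [hd, hsep]⟩)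

theorem Nat.centralBinom_sq_mul_le (n : ℕ) : n.centralBinom ^ 2 * (3 * n + 1) ≤ 16 ^ n := by
  induction n with
  | zero => simp
  | succ n ih =>
    refine Nat.le_of_mul_le_mul_left ?_ (by positivity : 0 < (n + 1) ^ 2)
    calc (n + 1) ^ 2 * ((n + 1).centralBinom ^ 2 * (3 * (n + 1) + 1))
        = ((n + 1) * (n + 1).centralBinom) ^ 2 * (3 * n + 4) := by ring
      _ = n.centralBinom ^ 2 * (4 * (2 * n + 1) ^ 2 * (3 * n + 4)) := by
          rw [Nat.succ_mul_centralBinom_succ]; ring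
      _ ≤ n.centralBinom ^ 2 * (16 * (n + 1) ^ 2 * (3 * n + 1)) := by
          exact Nat.mul_le_mul_left _ (by nlinarith)
      _ = 16 * (n + 1) ^ 2 * (n.centralBinom ^ 2 * (3 * n + 1)) := by ring
      _ ≤ 16 * (n + 1) ^ 2 * 16 ^ n := by gcongr
      _ = (n + 1) ^ 2 * 16 ^ (n + 1) := by ring

theorem mul_one_sub_pow_floor_lt_two {x p K : ℝ} (hx : 0 < x) (hp : 0 < p) (hp1 : p ≤ 1)
    (hp2 : p ≤ log 2) (hK : log x ≤ p * K) : x * (1 - p) ^ ⌊K⌋₊ < 2 := by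
  have hfloor : p * K - p < p * ⌊K⌋₊ := by
    have := Nat.sub_one_lt_floor K
    nlinarith
  calc x * (1 - p) ^ ⌊K⌋₊ ≤ x * exp (-p) ^ ⌊K⌋₊ := by
        gcongr
        linarith [add_one_le_exp (-p)]
    _ = exp (log x - p * ⌊K⌋₊) := by
        rw [exp_sub, exp_log hx, ← exp_nat_mul, div_eq_mul_inv, ← exp_neg]; ring_nf
    _ < exp (log 2) := exp_lt_exp.2 (by linarith)
    _ = 2 := exp_log two_pos

theorem two_mul_pi_sq_le_three_mul_exp_one_sq : 2 * π ^ 2 ≤ 3 * exp 1 ^ 2 := by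
  nlinarith [pi_lt_d2, exp_one_gt_d9, pi_pos]

theorem sqrt_mul_centralBinom_mul_le (r : ℕ) :
    √r * r.centralBinom * (π * √2) ≤ exp 1 * 4 ^ r := by
  have hC : ((r.centralBinom : ℝ)) ^ 2 * (3 * r + 1) ≤ (4 ^ r) ^ 2 := by
    rw [← pow_mul, mul_comm r 2, pow_mul]
    exact_mod_cast Nat.centralBinom_sq_mul_le r
  rw [← pow_le_pow_iff_left₀ (by positivity) (by positivity) two_ne_zero]
  calc (√r * r.centralBinom * (π * √2)) ^ 2 = 2 * π ^ 2 * r * (r.centralBinom : ℝ) ^ 2 := by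
        rw [mul_pow, mul_pow, mul_pow, sq_sqrt (by positivity), sq_sqrt zero_le_two]; ring
    _ ≤ 3 * exp 1 ^ 2 * r * (r.centralBinom : ℝ) ^ 2 := by
        gcongr ?_ * _ * _; exact two_mul_pi_sq_le_three_mul_exp_one_sq
    _ ≤ exp 1 ^ 2 * ((r.centralBinom : ℝ) ^ 2 * (3 * r + 1)) := by nlinarith [exp_pos 1]
    _ ≤ (exp 1 * 4 ^ r) ^ 2 := by rw [mul_pow]; gcongr

theorem log_pow_le_two_div_centralBinom_mul (r n : ℕ) :
    log ((n : ℝ) ^ (2 * r)) ≤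
      2 / r.centralBinom * (exp 1 * log 2 / (π * √2) * 4 ^ r * √r * logb 2 n) := by
  have hL : 0 ≤ log n := log_natCast_nonneg n
  have hkey := sqrt_mul_centralBinom_mul_le r
  have hC : (0 : ℝ) < r.centralBinom := by exact_mod_cast r.centralBinom_pos
  have hr : (r : ℝ) = √r * √r := (mul_self_sqrt (Nat.cast_nonneg r)).symm
  rw [log_pow, logb, show 2 / (r.centralBinom : ℝ) * (exp 1 * log 2 / (π * √2) * 4 ^ r * √r *
      (log n / log 2)) = 2 * √r * log n * (exp 1 * 4 ^ r) / (r.centralBinom * (π * √2)) by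
    field_simp, le_div_iff₀ (by positivity)]
  push_cast
  calc 2 * r * log n * (r.centralBinom * (π * √2))
      = 2 * √r * log n * (√r * r.centralBinom * (π * √2)) := by
        linear_combination (2 * log n * r.centralBinom * (π * √2)) * hr
    _ ≤ 2 * √r * log n * (exp 1 * 4 ^ r) := by gcongr

theorem natCast_pow_mul_one_sub_pow_floor_lt_two (r n : ℕ) :
    (n : ℝ) ^ (2 * r) * (1 - 2 / r.centralBinom) ^
      ⌊exp 1 * log 2 / (π * √2) * 4 ^ r * √r * logb 2 n⌋₊ < 2 := by
  rcases le_or_gt n 1 with hn | hn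
  · have hlogb : logb 2 (n : ℝ) = 0 := by interval_cases n <;> simp
    rw [hlogb, mul_zero, Nat.floor_zero, pow_zero, mul_one]
    calc (n : ℝ) ^ (2 * r) ≤ 1 := pow_le_one₀ (by positivity) (by exact_mod_cast hn)
      _ < 2 := one_lt_two
  have hlogb : 1 ≤ logb 2 n := by
    rw [← logb_self_eq_one one_lt_two]
    exact logb_le_logb_of_le one_lt_two two_pos (by exact_mod_cast hn)
  rcases Nat.lt_or_ge r 2 with hr | hr
  · interval_cases r
    · simp
    · -- Here `1 - 2 / C(2, 1) = 0`, so it suffices that the floor is positive.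
      have hsqrt2 : √2 < 1.5 := by
        rw [sqrt_lt' (by norm_num)]; norm_num
      have hK : 1 ≤ exp 1 * log 2 / (π * √2) * 4 ^ 1 * √(1 : ℕ) * logb 2 n := by
        rw [Nat.cast_one, sqrt_one, mul_one, pow_one, div_mul_eq_mul_div,
          div_mul_eq_mul_div, le_div_iff₀ (by positivity)]
        have hπ2 : π * √2 < 3.15 * 1.5 := mul_lt_mul'' pi_lt_d2 hsqrt2 pi_pos.le (sqrt_nonneg 2)
        have he2 : 2.7 * 0.69 < exp 1 * log 2 := mul_lt_mul'' (by linarith [exp_one_gt_d9])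
          (by linarith [log_two_gt_d9]) (by norm_num) (by norm_num)
        nlinarith
      have hp : (1 : ℝ) - 2 / (Nat.centralBinom 1 : ℕ) = 0 := by norm_num [Nat.centralBinom]
      rw [hp, zero_pow (Nat.pos_iff_ne_zero.1 <| (Nat.one_le_floor_iff _).2 hK), mul_zero]
      exact two_pos
  have hC : (6 : ℝ) ≤ r.centralBinom := by
    exact_mod_cast (show Nat.centralBinom 2 = 6 by rfl) ▸ Nat.centralBinom_strictMono.monotone hr
  have hp : 2 / (r.centralBinom : ℝ) ≤ 1 / 3 := by
    rw [div_le_div_iff₀ (by positivity) (by norm_num)]; linarith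
  refine mul_one_sub_pow_floor_lt_two (by positivity) (by positivity) (by linarith)
    (by linarith [log_two_gt_d9]) (log_pow_le_two_div_centralBinom_mul r n)

/-- For any rank-`r` hypergraph (with nonempty edges) on `n` vertices,
`π(H) ≤ (e·ln 2/(π·√2)) · 4^r · √r · log₂ n`. -/
theorem stmt5 {V : Type*} [Fintype V] [DecidableEq V] (r : ℕ)
    (E : Finset (Finset V)) (hne : ∀ e ∈ E, e.Nonempty)
    (hrank : ∀ e ∈ E, e.card ≤ r) :
    (sepDimH E : ℝ) ≤
      (Real.exp 1 * Real.log 2 / (Real.pi * Real.sqrt 2)) *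
        4 ^ r * Real.sqrt r * Real.logb 2 (Fintype.card V) := by
  obtain ⟨F, hF⟩ := exists_isSeparatingFamily hne hrank
    (natCast_pow_mul_one_sub_pow_floor_lt_two r (Fintype.card V))
  calc (sepDimH E : ℝ)
      ≤ ⌊exp 1 * log 2 / (π * √2) * 4 ^ r * √r * logb 2 (Fintype.card V)⌋₊ := by
        exact_mod_cast sepDimH_le_of_isSeparatingFamily hF
    _ ≤ _ := Nat.floor_le <| by
        have := div_nonneg (log_natCast_nonneg (Fintype.card V)) (log_nonneg one_le_two)
        positivity
end

section
/- For two disjoint sets e, f each of size at most r, a uniformly random permutation of a ground set containing e ∪ f separates e and f with probability at least 2(r!)²/(2r)!. -/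
open Finset

lemma Function.Injective.exists_equiv_fin_lt_iff {α β : Type*} [Fintype α] [LinearOrder β]
    {τ : α → β} (hτ : Function.Injective τ) :
    ∃ ρ : α ≃ Fin (Fintype.card α), ∀ a b, ρ a < ρ b ↔ τ a < τ b := by
  let _ : LinearOrder α := LinearOrder.lift' τ hτ
  let ρ := (Fintype.orderIsoFinOfCardEq α rfl).symm
  exact ⟨ρ.toEquiv, fun _ _ => ρ.lt_iff_lt⟩

lemma Function.Injective.exists_perm_lt_of_not {α β : Type*} [Fintype α] [LinearOrder β]
    {τ : α → β} (hτ : Function.Injective τ) (p : α → Prop) [DecidablePred p] :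
    ∃ g : Equiv.Perm α, ∀ a b, p a → ¬p b → τ (g a) < τ (g b) := by
  obtain ⟨ρ, hρ⟩ := hτ.exists_equiv_fin_lt_iff
  -- ordered lexicographically by `(¬p a, τ a)`, the elements satisfying `p` come first
  have hτ' : Function.Injective fun a => toLex (decide (¬p a), τ a) :=
    fun a b hab => hτ (Prod.ext_iff.mp (toLex.injective hab)).2
  obtain ⟨ρ', hρ'⟩ := hτ'.exists_equiv_fin_lt_iff
  refine ⟨ρ'.trans ρ.symm, fun a b ha hb => ?_⟩
  rw [← hρ, Equiv.trans_apply, Equiv.trans_apply, Equiv.apply_symm_apply,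
    Equiv.apply_symm_apply, hρ', Prod.Lex.toLex_lt_toLex]
  simp [ha, hb]

lemma Function.Injective.factorial_mul_factorial_le_card_perm {α β : Type*} [Fintype α]
    [DecidableEq α] [LinearOrder β] {τ : α → β} (hτ : Function.Injective τ)
    (p : α → Prop) [DecidablePred p] :
    (Fintype.card {a // p a}).factorial * (Fintype.card {a // ¬p a}).factorial ≤
      #{g : Equiv.Perm α | ∀ a b, p a → ¬p b → τ (g a) < τ (g b)} := by
  obtain ⟨g₀, hg₀⟩ := hτ.exists_perm_lt_of_not p
  let φ : Equiv.Perm {a // p a} × Equiv.Perm {a // ¬p a} → Equiv.Perm α :=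
    fun h => g₀ * Equiv.Perm.subtypeCongrHom p h
  have hφ : Function.Injective φ :=
    (mul_right_injective g₀).comp (Equiv.Perm.subtypeCongrHom_injective p)
  rw [← Fintype.card_perm, ← Fintype.card_perm, ← Fintype.card_prod, ← card_univ]
  refine card_le_card_of_injOn φ (fun h _ => mem_filter.mpr ⟨mem_univ _, fun a b ha hb => ?_⟩)
    hφ.injOn
  simp only [φ, Equiv.Perm.subtypeCongrHom_apply, Equiv.Perm.mul_apply,
    Equiv.Perm.subtypeCongr.left_apply _ _ ha, Equiv.Perm.subtypeCongr.right_apply _ _ hb]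
  exact hg₀ _ _ (h.1 ⟨a, ha⟩).2 (h.2 ⟨b, hb⟩).2

def Precedes {U β : Type*} [LT β] (σ : U → β) (e f : Finset U) : Prop :=
  ∀ a ∈ e, ∀ b ∈ f, σ a < σ b

instance {U β : Type*} [LT β] [DecidableLT β] (σ : U → β) (e f : Finset U) :
    Decidable (Precedes σ e f) :=
  inferInstanceAs (Decidable (∀ a ∈ e, ∀ b ∈ f, σ a < σ b))

lemma card_equiv_le_card_precedes_mul_choose {U β : Type*} [Fintype U] [DecidableEq U]
    [Fintype β] [DecidableEq β] [LinearOrder β] {e f : Finset U} (hef : Disjoint e f) :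
    Fintype.card (U ≃ β) ≤ #{σ : U ≃ β | Precedes σ e f} * (#e + #f).choose #e := by
  let R (σ : U ≃ β) (g : Equiv.Perm (e ∪ f : Finset U)) : Prop :=
    Precedes ((Equiv.Perm.ofSubtype g).trans σ) e f
  have hcard : Fintype.card (e ∪ f : Finset U) = #e + #f := by
    rw [Fintype.card_coe, card_union_of_disjoint hef]
  have hcard_e : Fintype.card {a : (e ∪ f : Finset U) // (a : U) ∈ e} = #e :=
    (Fintype.card_congr (Equiv.subtypeSubtypeEquivSubtype (mem_union_left f))).trans
      (Fintype.card_coe e)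
  have hcard_f : Fintype.card {a : (e ∪ f : Finset U) // (a : U) ∉ e} = #f := by
    rw [Fintype.card_subtype_compl, hcard_e, hcard, Nat.add_sub_cancel_left]
  have above (σ : U ≃ β) : (#e).factorial * (#f).factorial ≤ #(bipartiteAbove R univ σ) := by
    have := (σ.injective.comp Subtype.val_injective).factorial_mul_factorial_le_card_perm
      (fun a : (e ∪ f : Finset U) => (a : U) ∈ e)
    rw [hcard_e, hcard_f] at this
    refine this.trans (card_le_card fun g hg => ?_)
    simp only [mem_filter, mem_univ, true_and, bipartiteAbove, R] at hg ⊢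
    intro a ha b hb
    simp only [Equiv.trans_apply, Equiv.Perm.ofSubtype_apply_of_mem _ (mem_union_left f ha),
      Equiv.Perm.ofSubtype_apply_of_mem _ (mem_union_right e hb)]
    exact hg _ _ ha (disjoint_right.mp hef hb)
  have below (g : Equiv.Perm (e ∪ f : Finset U)) :
      #(bipartiteBelow R univ g) = #{σ : U ≃ β | Precedes σ e f} :=
    card_equiv (Equiv.equivCongr (Equiv.Perm.ofSubtype g).symm (Equiv.refl β)) fun σ => by
      simp only [bipartiteBelow, mem_filter, mem_univ, true_and, R]; rfl
  have hcount := card_mul_le_card_mul R (fun σ _ => above σ) (fun g _ => (below g).le)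
  rw [card_univ, card_univ, Fintype.card_perm, hcard,
    ← Nat.add_choose_mul_factorial_mul_factorial, ← Nat.choose_symm_add] at hcount
  refine Nat.le_of_mul_le_mul_right ?_ (by positivity : 0 < (#e).factorial * (#f).factorial)
  linarith

lemma sepF_iff_precedes {V : Type*} {n : ℕ} (σ : V ≃ Fin n) (A B : Finset V) :
    SepF σ A B ↔ Precedes σ A B ∨ Precedes σ B A :=
  or_congr_right forall₂_comm

instance inst_s6 {V : Type*} {n : ℕ} (σ : V ≃ Fin n) (A B : Finset V) : Decidable (SepF σ A B) :=
  decidable_of_iff _ (sepF_iff_precedes σ A B).symm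

lemma two_mul_card_equiv_le_card_sepF_mul_choose {U : Type*} [Fintype U] [DecidableEq U]
    {n : ℕ} {e f : Finset U} (he : e.Nonempty) (hf : f.Nonempty) (hef : Disjoint e f) :
    2 * Fintype.card (U ≃ Fin n) ≤
      Nat.card {σ : U ≃ Fin n // SepF σ e f} * (#e + #f).choose #e := by
  have hsep : Nat.card {σ : U ≃ Fin n // SepF σ e f} =
      #{σ : U ≃ Fin n | Precedes σ e f} + #{σ : U ≃ Fin n | Precedes σ f e} := by
    rw [Nat.card_eq_fintype_card, Fintype.card_subtype]
    simp only [sepF_iff_precedes, filter_or]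
    refine card_union_of_disjoint (disjoint_filter.mpr fun σ _ hef hfe => ?_)
    obtain ⟨a, ha⟩ := he
    obtain ⟨b, hb⟩ := hf
    exact lt_asymm (hef a ha b hb) (hfe b hb a ha)
  rw [hsep, add_mul, two_mul]
  gcongr
  · exact card_equiv_le_card_precedes_mul_choose hef
  · rw [add_comm, ← Nat.choose_symm_add]
    exact card_equiv_le_card_precedes_mul_choose hef.symm

lemma sepF_of_eq_empty_or_eq_empty {V : Type*} {n : ℕ} (σ : V ≃ Fin n) {A B : Finset V}
    (h : A = ∅ ∨ B = ∅) : SepF σ A B :=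
  Or.inl fun a ha b hb => by rcases h with rfl | rfl <;> simp_all

lemma two_mul_card_equiv_le_card_sepF_mul_centralBinom {U : Type*} [Fintype U] [DecidableEq U]
    {n r : ℕ} (hr : 0 < r) {e f : Finset U} (he : #e ≤ r) (hf : #f ≤ r) (hef : Disjoint e f) :
    2 * Fintype.card (U ≃ Fin n) ≤
      Nat.card {σ : U ≃ Fin n // SepF σ e f} * r.centralBinom := by
  by_cases hempty : e = ∅ ∨ f = ∅
  · rw [Nat.card_congr (Equiv.subtypeUnivEquiv fun σ => sepF_of_eq_empty_or_eq_empty σ hempty),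
      Nat.card_eq_fintype_card, mul_comm]
    exact Nat.mul_le_mul_left _ (Nat.two_le_centralBinom r hr)
  push Not at hempty
  have hchoose : (#e + #f).choose #e ≤ r.centralBinom :=
    (Nat.choose_le_choose _ (by omega)).trans (Nat.choose_le_centralBinom _ _)
  exact (two_mul_card_equiv_le_card_sepF_mul_choose hempty.1 hempty.2 hef).trans (by gcongr)

/-- For two disjoint sets `e`, `f` each of size at most `r` (`r ≥ 1`), a
uniformly random permutation of the ground set separates `e` and `f` with
probability at least `2(r!)²/(2r)!`. -/
theorem stmt6 {U : Type*} [Fintype U] [DecidableEq U] (r : ℕ) (hr : 0 < r)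
    (e f : Finset U) (he : e.card ≤ r) (hf : f.card ≤ r)
    (hef : Disjoint e f) :
    (2 * (Nat.factorial r : ℝ) ^ 2 / (Nat.factorial (2 * r) : ℝ)) ≤
      (Nat.card {σ : U ≃ Fin (Fintype.card U) // SepF σ e f} : ℝ) /
        (Nat.card (U ≃ Fin (Fintype.card U)) : ℝ) := by
  have hfactorial : ((2 * r).factorial : ℝ) = r.centralBinom * (r.factorial : ℝ) ^ 2 := by
    rw [Nat.centralBinom_eq_two_mul_choose, two_mul, ← Nat.add_choose_mul_factorial_mul_factorial]
    push_cast
    ring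
  have hpos : 0 < Nat.card (U ≃ Fin (Fintype.card U)) :=
    Nat.card_pos_iff.mpr ⟨⟨Fintype.equivFin U⟩, inferInstance⟩
  rw [hfactorial, mul_div_mul_right _ _ (by positivity),
    div_le_div_iff₀ (Nat.cast_pos.mpr r.centralBinom_pos) (Nat.cast_pos.mpr hpos),
    Nat.card_eq_fintype_card (α := U ≃ _)]
  exact_mod_cast two_mul_card_equiv_le_card_sepF_mul_centralBinom hr he hf hef
end

section
/- For any graph G on n vertices, there exists a family of at most 6.84·log₂ n permutations of V(G) that is simultaneously pairwise suitable and 3-mixing for G; in particular π(G) ≤ π*(G) ≤ 6.84·log₂ n. -/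
/-- A permutation `σ` separates two sets `A`, `B`: all of `A` comes before all
of `B`, or vice versa. -/
def SepPerm {V : Type*} {n : ℕ} (σ : V ≃ Fin n) (A B : Set V) : Prop :=
  (∀ a ∈ A, ∀ b ∈ B, σ a < σ b) ∨ (∀ a ∈ A, ∀ b ∈ B, σ b < σ a)

/-- A family of permutations is pairwise suitable for a graph `G` if every
pair of disjoint edges is separated by some member of the family. -/
def PWSuitable {V : Type*} [Fintype V] (G : SimpleGraph V)
    {k : ℕ} (F : Fin k → (V ≃ Fin (Fintype.card V))) : Prop :=
  ∀ e ∈ G.edgeSet, ∀ f ∈ G.edgeSet, (∀ x, ¬(x ∈ e ∧ x ∈ f)) →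
    ∃ i, SepPerm (F i) {x | x ∈ e} {x | x ∈ f}

/-- The separation dimension of a graph: the minimum size of a pairwise
suitable family of permutations of the vertex set. -/
noncomputable def sepDim {V : Type*} [Fintype V] (G : SimpleGraph V) : ℕ :=
  sInf {k : ℕ | ∃ F : Fin k → (V ≃ Fin (Fintype.card V)), PWSuitable G F}

/-- A family of permutations is 3-mixing for `G`: for every two adjacent edges
`{a,b}`, `{a,c}`, some permutation places `a` strictly between `b` and `c`. -/
def Mixing3 {V : Type*} [Fintype V] (G : SimpleGraph V)
    {k : ℕ} (F : Fin k → (V ≃ Fin (Fintype.card V))) : Prop :=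
  ∀ a b c : V, G.Adj a b → G.Adj a c → b ≠ c →
    ∃ i, ((F i) b < (F i) a ∧ (F i) a < (F i) c) ∨
         ((F i) c < (F i) a ∧ (F i) a < (F i) b)

/-- `π*(G)`: minimum size of a family of permutations that is simultaneously
pairwise suitable and 3-mixing for `G`. -/
noncomputable def sepStarDim {V : Type*} [Fintype V] (G : SimpleGraph V) : ℕ :=
  sInf {k : ℕ | ∃ F : Fin k → (V ≃ Fin (Fintype.card V)),
    PWSuitable G F ∧ Mixing3 G F}

/-!
Union bound over `k` independent uniform bijections `V ≃ Fin n`. For disjoint edges `ab`, `cd`,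
precomposition with the transpositions `(b c)` and `(b d)` carries the event "`ab` and `cd` are
separated" to the same event for the pairings `ac | bd` and `ad | bc`; since every bijection
separates one of the three pairings, the event has probability at least `1/3`. In the same way
one of three distinct vertices always lies between the other two, so `a` lies between `b` and
`c` with probability at least `1/3`. There are fewer than `2n⁴/3` such constraints, and
`(3/2)^k ≥ 2n⁴/3` for `k = ⌊6.84 log₂ n⌋` because `(3/2)^6.84 > 2^4`.
-/

open Finset

section Counting

variable {α : Type*} [Fintype α]

theorem card_le_card_mul_card_filter {ι : Type*} [Fintype ι] [DecidableEq α]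
    (P : α → Prop) [DecidablePred P] (e : ι → α ≃ α) (hcover : ∀ x, ∃ i, P (e i x)) :
    Fintype.card α ≤ Fintype.card ι * #{x | P x} := by
  have hsub : (univ : Finset α) ⊆ univ.biUnion fun i => {x | P (e i x)} := fun x _ ↦ by
    simpa using hcover x
  have hcard (i : ι) : #{x | P (e i x)} = #{x | P x} :=
    card_equiv (e i) fun x ↦ by simp
  calc Fintype.card α ≤ ∑ i, #{x | P (e i x)} := (card_le_card hsub).trans card_biUnion_le
    _ = Fintype.card ι * #{x | P x} := by simp [hcard]

theorem three_mul_card_filter_not_le [DecidableEq α] (P : α → Prop) [DecidablePred P]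
    (e₁ e₂ : α ≃ α) (hcover : ∀ x, P x ∨ P (e₁ x) ∨ P (e₂ x)) :
    3 * #{x | ¬P x} ≤ 2 * Fintype.card α := by
  have h := card_le_card_mul_card_filter P ![Equiv.refl α, e₁, e₂] fun x ↦ by
    simpa [Fin.exists_fin_succ] using hcover x
  have := card_filter_add_card_filter_not (s := univ) fun x ↦ P x
  rw [card_univ, Fintype.card_fin] at *
  omega

theorem exists_forall_exists_of_card_filter_not_le [Nonempty α] {ι : Type*} (s : Finset ι)
    (E : ι → α → Prop) [∀ j, DecidablePred (E j)] {a b k : ℕ}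
    (hbad : ∀ j ∈ s, b * #{x | ¬E j x} ≤ a * Fintype.card α) (hs : #s * a ^ k < b ^ k) :
    ∃ F : Fin k → α, ∀ j ∈ s, ∃ i, E j (F i) := by
  classical
  by_contra! h
  have hsub : (univ : Finset (Fin k → α)) ⊆
      s.biUnion fun j ↦ Fintype.piFinset fun _ ↦ {x | ¬E j x} := fun F _ ↦ by
    obtain ⟨j, hj, hF⟩ := h F
    simpa [Fintype.mem_piFinset] using ⟨j, hj, hF⟩
  have hpos : 0 < Fintype.card α ^ k := pow_pos Fintype.card_pos k
  have : b ^ k * Fintype.card α ^ k < b ^ k * Fintype.card α ^ k :=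
    calc b ^ k * Fintype.card α ^ k
        ≤ b ^ k * ∑ j ∈ s, #{x | ¬E j x} ^ k := by
          gcongr
          simpa [Fintype.card_piFinset_const] using (card_le_card hsub).trans card_biUnion_le
      _ = ∑ j ∈ s, (b * #{x | ¬E j x}) ^ k := by simp [mul_sum, mul_pow]
      _ ≤ ∑ _j ∈ s, (a * Fintype.card α) ^ k :=
          sum_le_sum fun j hj ↦ Nat.pow_le_pow_left (hbad j hj) k
      _ = #s * a ^ k * Fintype.card α ^ k := by simp [mul_pow, mul_assoc]
      _ < b ^ k * Fintype.card α ^ k := by gcongr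
  exact this.false

end Counting

section Events

theorem pairing_cases {β : Type*} [LinearOrder β] {p q r s : β} (hpq : p ≠ q) (hrs : r ≠ s)
    (hpr : p ≠ r) (hps : p ≠ s) (hqr : q ≠ r) (hqs : q ≠ s) :
    (p < r ∧ p < s ∧ q < r ∧ q < s ∨ r < p ∧ s < p ∧ r < q ∧ s < q) ∨
      (p < q ∧ p < s ∧ r < q ∧ r < s ∨ q < p ∧ s < p ∧ q < r ∧ s < r) ∨
      (p < r ∧ p < q ∧ s < r ∧ s < q ∨ r < p ∧ q < p ∧ r < s ∧ q < s) := by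
  rcases hpq.lt_or_gt with hpq | hpq <;> rcases hrs.lt_or_gt with hrs | hrs <;>
    rcases hpr.lt_or_gt with hpr | hpr <;> rcases hps.lt_or_gt with hps | hps <;>
    rcases hqr.lt_or_gt with hqr | hqr <;> rcases hqs.lt_or_gt with hqs | hqs <;>
    simp only [*, not_lt_of_gt, and_true, and_false, or_false, or_true] <;>
    order

theorem sepPerm_mk_iff {V : Type*} {n : ℕ} (σ : V ≃ Fin n) (a b c d : V) :
    SepPerm σ {x | x ∈ s(a, b)} {x | x ∈ s(c, d)} ↔
      (σ a < σ c ∧ σ a < σ d ∧ σ b < σ c ∧ σ b < σ d) ∨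
        (σ c < σ a ∧ σ d < σ a ∧ σ c < σ b ∧ σ d < σ b) := by
  simp only [SepPerm, Set.mem_ofPred_eq, Sym2.mem_iff, forall_eq_or_imp, forall_eq]
  tauto

variable {V : Type*} [Fintype V] [DecidableEq V] {n : ℕ}

open Classical in
theorem three_mul_card_not_sepPerm_le {e f : Sym2 V} (he : ¬e.IsDiag) (hf : ¬f.IsDiag)
    (hef : ∀ x, ¬(x ∈ e ∧ x ∈ f)) :
    3 * #{σ : V ≃ Fin n | ¬SepPerm σ {x | x ∈ e} {x | x ∈ f}} ≤
      2 * Fintype.card (V ≃ Fin n) := by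
  induction e using Sym2.ind with | h a b => ?_
  induction f using Sym2.ind with | h c d => ?_
  simp only [Sym2.mk_isDiag_iff, Sym2.mem_iff] at he hf hef
  have hac : a ≠ c := fun h ↦ hef a ⟨by simp, by simp [h]⟩
  have had : a ≠ d := fun h ↦ hef a ⟨by simp, by simp [h]⟩
  have hbc : b ≠ c := fun h ↦ hef b ⟨by simp, by simp [h]⟩
  have hbd : b ≠ d := fun h ↦ hef b ⟨by simp, by simp [h]⟩
  refine three_mul_card_filter_not_le _ ((Equiv.swap b c).equivCongr (.refl _))
    ((Equiv.swap b d).equivCongr (.refl _)) fun σ ↦ ?_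
  simp only [sepPerm_mk_iff, Equiv.equivCongr_apply_apply, Equiv.symm_swap, Equiv.refl_apply,
    Equiv.swap_apply_left, Equiv.swap_apply_right,
    Equiv.swap_apply_of_ne_of_ne he hac, Equiv.swap_apply_of_ne_of_ne he had,
    Equiv.swap_apply_of_ne_of_ne hbd.symm (Ne.symm hf), Equiv.swap_apply_of_ne_of_ne hbc.symm hf]
  exact pairing_cases (σ.injective.ne he) (σ.injective.ne hf) (σ.injective.ne hac)
    (σ.injective.ne had) (σ.injective.ne hbc) (σ.injective.ne hbd)

open Classical in
theorem three_mul_card_not_between_le {a b c : V} (hab : a ≠ b) (hac : a ≠ c) (hbc : b ≠ c) :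
    3 * #{σ : V ≃ Fin n | ¬(σ b < σ a ∧ σ a < σ c ∨ σ c < σ a ∧ σ a < σ b)} ≤
      2 * Fintype.card (V ≃ Fin n) := by
  refine three_mul_card_filter_not_le _ ((Equiv.swap a b).equivCongr (.refl _))
    ((Equiv.swap a c).equivCongr (.refl _)) fun σ ↦ ?_
  simp only [Equiv.equivCongr_apply_apply, Equiv.symm_swap, Equiv.refl_apply,
    Equiv.swap_apply_left, Equiv.swap_apply_right,
    Equiv.swap_apply_of_ne_of_ne hac.symm hbc.symm, Equiv.swap_apply_of_ne_of_ne hab.symm hbc]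
  have := σ.injective.ne hab
  have := σ.injective.ne hac
  have := σ.injective.ne hbc
  omega

end Events

section Numerics

open Real

theorem four_mul_log_two_le : 4 * log 2 ≤ 6.84 * log (3 / 2) := by
  -- `(3/2)^6.84 ≥ 2^4` with the exponents made integral: `(3/2)^684 ≥ 2^400`
  have h : (2 : ℝ) ^ 1084 ≤ 3 ^ 684 := by exact_mod_cast (by decide +kernel : 2 ^ 1084 ≤ 3 ^ 684)
  have := log_le_log (by positivity) h
  rw [log_pow, log_pow] at this
  rw [log_div three_ne_zero two_ne_zero]
  push_cast at this
  linarith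

theorem pow_four_le_rpow_logb {t : ℝ} (ht : 1 ≤ t) :
    t ^ 4 ≤ (3 / 2 : ℝ) ^ (6.84 * logb 2 t) := by
  rw [← log_le_log_iff (by positivity) (by positivity), log_pow, log_rpow (by norm_num), logb]
  have hlog2 : 0 < log 2 := log_pos one_lt_two
  have := mul_le_mul_of_nonneg_left four_mul_log_two_le (div_nonneg (log_nonneg ht) hlog2.le)
  field_simp at this ⊢
  linarith

theorem choose_two_sq_add_mul_two_pow_floor_lt (n : ℕ) :
    (n.choose 2 ^ 2 + n * (n * n - n)) * 2 ^ ⌊6.84 * logb 2 n⌋₊ < 3 ^ ⌊6.84 * logb 2 n⌋₊ := by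
  set k := ⌊6.84 * logb 2 n⌋₊
  rcases le_or_gt n 1 with hn | hn
  · interval_cases n <;> simp
  have hn' : (2 : ℝ) ≤ n := by exact_mod_cast hn
  have hk : (2 / 3 : ℝ) * n ^ 4 ≤ (3 / 2) ^ k :=
    calc (2 / 3 : ℝ) * n ^ 4 ≤ 2 / 3 * (3 / 2) ^ (6.84 * logb 2 n) := by
          gcongr; exact pow_four_le_rpow_logb (by linarith)
      _ = (3 / 2) ^ (6.84 * logb 2 n - 1) := by rw [rpow_sub (by norm_num), rpow_one]; ring
      _ ≤ (3 / 2) ^ (k : ℝ) :=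
          rpow_le_rpow_of_exponent_le (by norm_num) (Nat.sub_one_lt_floor _).le
      _ = (3 / 2) ^ k := rpow_natCast _ _
  have hcount : ((n.choose 2 ^ 2 + n * (n * n - n) : ℕ) : ℝ) < 2 / 3 * n ^ 4 := by
    push_cast [Nat.cast_choose_two, Nat.cast_sub (Nat.le_mul_self n)]
    -- `8n⁴ - 12 · count = n²(5n² - 6n + 9)`
    nlinarith [mul_pos (by positivity : (0 : ℝ) < n ^ 2)
      (by nlinarith : (0 : ℝ) < 5 * n ^ 2 - 6 * n + 9)]
  have : ((n.choose 2 ^ 2 + n * (n * n - n) : ℕ) : ℝ) * 2 ^ k < 3 ^ k :=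
    calc _ < 2 / 3 * (n : ℝ) ^ 4 * 2 ^ k := by gcongr
      _ ≤ (3 / 2) ^ k * 2 ^ k := by gcongr
      _ = 3 ^ k := by rw [← mul_pow]; norm_num
  exact_mod_cast this

end Numerics

theorem exists_pwSuitable_mixing3 {V : Type*} [Fintype V] (G : SimpleGraph V) {k : ℕ}
    (hk : ((Fintype.card V).choose 2 ^ 2 +
      Fintype.card V * (Fintype.card V * Fintype.card V - Fintype.card V)) * 2 ^ k < 3 ^ k) :
    ∃ F : Fin k → (V ≃ Fin (Fintype.card V)), PWSuitable G F ∧ Mixing3 G F := by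
  classical
  have : Nonempty (V ≃ Fin (Fintype.card V)) := ⟨Fintype.equivFin V⟩
  let disjointEdges : Finset (Sym2 V × Sym2 V) :=
    {p ∈ G.edgeFinset ×ˢ G.edgeFinset | ∀ x, ¬(x ∈ p.1 ∧ x ∈ p.2)}
  let cherries : Finset (V × V × V) :=
    {t ∈ univ ×ˢ univ.offDiag | G.Adj t.1 t.2.1 ∧ G.Adj t.1 t.2.2}
  let E : (Sym2 V × Sym2 V) ⊕ (V × V × V) → (V ≃ Fin (Fintype.card V)) → Prop :=
    Sum.elim (fun p σ ↦ SepPerm σ {x | x ∈ p.1} {x | x ∈ p.2})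
      (fun t σ ↦ σ t.2.1 < σ t.1 ∧ σ t.1 < σ t.2.2 ∨ σ t.2.2 < σ t.1 ∧ σ t.1 < σ t.2.1)
  have hcard : #(disjointEdges.disjSum cherries) ≤ (Fintype.card V).choose 2 ^ 2 +
      Fintype.card V * (Fintype.card V * Fintype.card V - Fintype.card V) := by
    rw [card_disjSum]
    gcongr
    · calc #disjointEdges ≤ #(G.edgeFinset ×ˢ G.edgeFinset) := card_filter_le _ _
        _ ≤ (Fintype.card V).choose 2 ^ 2 := by
          rw [card_product, ← sq]
          exact Nat.pow_le_pow_left G.card_edgeFinset_le_card_choose_two 2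
    · exact (card_filter_le _ _).trans (by simp [offDiag_card])
  have hbad : ∀ j ∈ disjointEdges.disjSum cherries,
      3 * #{σ | ¬E j σ} ≤ 2 * Fintype.card (V ≃ Fin (Fintype.card V)) := by
    rintro (⟨e, f⟩ | ⟨a, b, c⟩) hj
    · simp only [inl_mem_disjSum, disjointEdges, mem_filter, mem_product,
        SimpleGraph.mem_edgeFinset] at hj
      obtain ⟨⟨he, hf⟩, hef⟩ := hj
      exact three_mul_card_not_sepPerm_le (G.not_isDiag_of_mem_edgeSet he)
        (G.not_isDiag_of_mem_edgeSet hf) hef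
    · simp only [inr_mem_disjSum, cherries, mem_filter, mem_product, mem_offDiag] at hj
      obtain ⟨⟨-, -, -, hbc⟩, hab, hac⟩ := hj
      convert three_mul_card_not_between_le (n := Fintype.card V) hab.ne hac.ne hbc using 4
      rfl
  obtain ⟨F, hF⟩ := exists_forall_exists_of_card_filter_not_le _ E hbad
    ((Nat.mul_le_mul_right _ hcard).trans_lt hk)
  refine ⟨F, fun e he f hf hef ↦ hF (.inl (e, f)) ?_,
    fun a b c hab hac hbc ↦ hF (.inr (a, b, c)) ?_⟩
  · simpa [disjointEdges] using ⟨⟨he, hf⟩, fun x hx hx' ↦ hef x ⟨hx, hx'⟩⟩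
  · simpa [cherries] using ⟨hbc, hab, hac⟩

theorem sepDim_le_sepStarDim {V : Type*} [Fintype V] {G : SimpleGraph V}
    (h : ∃ k, ∃ F : Fin k → (V ≃ Fin (Fintype.card V)), PWSuitable G F ∧ Mixing3 G F) :
    sepDim G ≤ sepStarDim G := by
  obtain ⟨F, hF, -⟩ := Nat.sInf_mem h
  exact Nat.sInf_le ⟨F, hF⟩

theorem stmt7_general {V : Type*} [Fintype V] (G : SimpleGraph V) :
    (∃ (k : ℕ) (F : Fin k → (V ≃ Fin (Fintype.card V))),
      (k : ℝ) ≤ 6.84 * Real.logb 2 (Fintype.card V) ∧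
      PWSuitable G F ∧ Mixing3 G F) ∧
    sepDim G ≤ sepStarDim G ∧
    (sepStarDim G : ℝ) ≤ 6.84 * Real.logb 2 (Fintype.card V) := by
  set k := ⌊6.84 * Real.logb 2 (Fintype.card V)⌋₊
  obtain ⟨F, hPW, hMix⟩ := exists_pwSuitable_mixing3 G (choose_two_sq_add_mul_two_pow_floor_lt _)
  have hk : (k : ℝ) ≤ 6.84 * Real.logb 2 (Fintype.card V) := Nat.floor_le <|
    mul_nonneg (by norm_num) (div_nonneg (Real.log_natCast_nonneg _) (Real.log_nonneg one_le_two))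
  have hstar : sepStarDim G ≤ k := Nat.sInf_le ⟨F, hPW, hMix⟩
  exact ⟨⟨k, F, hk, hPW, hMix⟩, sepDim_le_sepStarDim ⟨k, F, hPW, hMix⟩,
    (Nat.cast_le.2 hstar).trans hk⟩

/-- For any graph `G` on `n` vertices there is a family of at most
`6.84·log₂ n` permutations that is both pairwise suitable and 3-mixing; in
particular `π(G) ≤ π*(G) ≤ 6.84·log₂ n`. -/
theorem stmt7 {V : Type*} [Fintype V] [DecidableEq V] (G : SimpleGraph V) :
    (∃ (k : ℕ) (F : Fin k → (V ≃ Fin (Fintype.card V))),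
      (k : ℝ) ≤ 6.84 * Real.logb 2 (Fintype.card V) ∧
      PWSuitable G F ∧ Mixing3 G F) ∧
    sepDim G ≤ sepStarDim G ∧
    (sepStarDim G : ℝ) ≤ 6.84 * Real.logb 2 (Fintype.card V) :=
  stmt7_general G
end

section
/- Every k-degenerate graph has star arboricity at most 2k: its edge set can be partitioned into at most 2k star forests. -/
/-!
Orient every edge towards the later endpoint in a degeneracy order; each vertex then has at most
`k` out-edges, which we colour injectively with `k` colours. In each colour class every vertex has
at most one out-neighbour, its parent, and the parent lies strictly later, so each class is a
rooted forest. Splitting a rooted forest according to the parity of the depth of the parent end of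
each edge yields two star forests: the centres are the vertices of the given parity, and each
leaf hangs on its unique parent. This gives `2k` star forests.
-/

/-- `F` is a star forest: every connected component is a star. Equivalently,
there is no walk `a-b-c-d` with `a ≠ c` and `b ≠ d` (no path on four vertices
and no triangle). -/
def IsStarForest {V : Type*} (F : SimpleGraph V) : Prop :=
  ¬ ∃ a b c d : V, F.Adj a b ∧ F.Adj b c ∧ F.Adj c d ∧ a ≠ c ∧ b ≠ d

namespace SimpleGraph

variable {V : Type*}

def IsStarForestDecomposition {ι : Type*} (G : SimpleGraph V) (F : ι → SimpleGraph V) : Prop :=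
  (∀ i, IsStarForest (F i) ∧ F i ≤ G) ∧
    (∀ i j, i ≠ j → Disjoint (F i).edgeSet (F j).edgeSet) ∧
    (∀ e ∈ G.edgeSet, ∃ i, e ∈ (F i).edgeSet)

theorem IsStarForestDecomposition.comp_equiv {ι κ : Type*} {G : SimpleGraph V}
    {F : ι → SimpleGraph V} (hF : G.IsStarForestDecomposition F) (e : κ ≃ ι) :
    G.IsStarForestDecomposition (F ∘ e) := by
  obtain ⟨hstar, hdisj, hcover⟩ := hF
  refine ⟨fun i => hstar (e i), fun i j hij => hdisj _ _ (e.injective.ne hij), fun x hx => ?_⟩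
  obtain ⟨i, hi⟩ := hcover x hx
  exact ⟨e.symm i, by simpa using hi⟩

section ParentRelation

variable (P : V → V → Prop) (r : V → ℕ)

-- `P x y` means that `y` is the parent of `x`; `r` strictly decreases towards the roots.
open Classical in
noncomputable def parentDepth (hr : ∀ x y, P x y → r y < r x) (x : V) : ℕ :=
  if h : ∃ y, P x y then parentDepth hr h.choose + 1 else 0
termination_by r x
decreasing_by exact hr _ _ h.choose_spec

variable {P r}

theorem parentDepth_of_rel (hr : ∀ x y, P x y → r y < r x)
    (hP : ∀ x y z, P x y → P x z → y = z) {x y : V} (hxy : P x y) :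
    parentDepth P r hr x = parentDepth P r hr y + 1 := by
  have h : ∃ y, P x y := ⟨y, hxy⟩
  rw [parentDepth, dif_pos h, hP x _ y h.choose_spec hxy]

end ParentRelation

def parityForest (P : V → V → Prop) (d : V → ℕ) (p : ℕ) : SimpleGraph V :=
  fromRel fun x y => P x y ∧ d y % 2 = p

theorem isStarForest_parityForest {P : V → V → Prop} {d : V → ℕ} (p : ℕ)
    (hP : ∀ x y z, P x y → P x z → y = z) (hd : ∀ x y, P x y → d x = d y + 1) :
    IsStarForest (parityForest P d p) := by
  rintro ⟨a, b, c, e, ⟨-, hab⟩, ⟨-, hbc⟩, ⟨-, hce⟩, hac, hbe⟩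
  rcases hbc with ⟨hbc, hc⟩ | ⟨hcb, hb⟩
  · have := hd b c hbc
    rcases hab with ⟨-, hb⟩ | ⟨hba, -⟩
    · omega
    · exact hac (hP b a c hba hbc)
  · have := hd c b hcb
    rcases hce with ⟨hce, -⟩ | ⟨-, hc⟩
    · exact hbe (hP c b e hcb hce)
    · omega

theorem exists_isStarForestDecomposition_of_parentRelations {ι : Type*} (G : SimpleGraph V)
    (P : ι → V → V → Prop) (r : V → ℕ) (hr : ∀ c x y, P c x y → r y < r x)
    (hP : ∀ c x y z, P c x y → P c x z → y = z)
    (hcol : ∀ c c' x y, P c x y → P c' x y → c = c') (hG : ∀ c x y, P c x y → G.Adj x y)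
    (hcover : ∀ x y, G.Adj x y → (∃ c, P c x y) ∨ ∃ c, P c y x) :
    ∃ F : Fin 2 × ι → SimpleGraph V, G.IsStarForestDecomposition F := by
  let d := fun c => parentDepth (P c) r (hr c)
  have hd : ∀ c x y, P c x y → d c x = d c y + 1 := fun c _ _ =>
    parentDepth_of_rel (hr c) (hP c)
  refine ⟨fun i => parityForest (P i.2) (d i.2) i.1,
    fun i => ⟨isStarForest_parityForest _ (hP i.2) (hd i.2), ?_⟩, ?_, ?_⟩
  · rintro x y ⟨-, ⟨hxy, -⟩ | ⟨hyx, -⟩⟩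
    exacts [hG _ _ _ hxy, (hG _ _ _ hyx).symm]
  · rintro ⟨p, c⟩ ⟨q, c'⟩ hne
    refine Set.disjoint_left.2 fun e he he' => hne ?_
    induction e using Sym2.ind with | _ x y =>
    obtain ⟨-, ⟨hxy, hp⟩ | ⟨hyx, hp⟩⟩ := he <;> obtain ⟨-, ⟨hxy', hq⟩ | ⟨hyx', hq⟩⟩ := he'
    · obtain rfl := hcol _ _ _ _ hxy hxy'
      exact Prod.ext (Fin.ext (hp.symm.trans hq)) rfl
    · exact absurd (hr _ _ _ hxy) (hr _ _ _ hyx').asymm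
    · exact absurd (hr _ _ _ hyx) (hr _ _ _ hxy').asymm
    · obtain rfl := hcol _ _ _ _ hyx hyx'
      exact Prod.ext (Fin.ext (hp.symm.trans hq)) rfl
  · intro e he
    induction e using Sym2.ind with | _ x y =>
    obtain ⟨c, hxy⟩ | ⟨c, hyx⟩ := hcover x y he
    exacts [⟨(⟨d c y % 2, Nat.mod_lt _ two_pos⟩, c), G.ne_of_adj he, Or.inl ⟨hxy, rfl⟩⟩,
      ⟨(⟨d c x % 2, Nat.mod_lt _ two_pos⟩, c), G.ne_of_adj he, Or.inr ⟨hyx, rfl⟩⟩]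

end SimpleGraph

theorem stmt8_general {V : Type*} [Fintype V] (G : SimpleGraph V)
    (k : ℕ)
    (hdeg : ∃ ord : V ≃ Fin (Fintype.card V),
      ∀ v : V, {u : V | G.Adj v u ∧ ord v < ord u}.ncard ≤ k) :
    ∃ F : Fin (2 * k) → SimpleGraph V,
      (∀ i, IsStarForest (F i) ∧ F i ≤ G) ∧
      (∀ i j, i ≠ j → Disjoint (F i).edgeSet (F j).edgeSet) ∧
      (∀ e ∈ G.edgeSet, ∃ i, e ∈ (F i).edgeSet) := by
  classical
  obtain ⟨ord, hk⟩ := hdeg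
  let up : V → Set V := fun v => {u | G.Adj v u ∧ ord v < ord u}
  have hembed : ∀ v, Nonempty (up v ↪ Fin k) := fun v =>
    Function.Embedding.nonempty_of_card_le <| by
      rw [Fintype.card_fin, ← Nat.card_eq_fintype_card, Nat.card_coe_set_eq]
      exact hk v
  let col v := (hembed v).some
  obtain ⟨F, hF⟩ := G.exists_isStarForestDecomposition_of_parentRelations
    (fun c x y => ∃ h : y ∈ up x, col x ⟨y, h⟩ = c) (fun x => (ord x).rev)
    (by rintro c x y ⟨⟨-, hlt⟩, -⟩; exact Fin.rev_lt_rev.2 hlt)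
    (by rintro c x y z ⟨hy, rfl⟩ ⟨hz, hyz⟩; exact congrArg Subtype.val ((col x).injective hyz).symm)
    (by rintro c c' x y ⟨-, rfl⟩ ⟨-, rfl⟩; rfl)
    (by rintro c x y ⟨⟨hxy, -⟩, -⟩; exact hxy)
    (fun x y hxy => (ord.injective.ne (G.ne_of_adj hxy)).lt_or_gt.imp
      (fun h => ⟨_, ⟨hxy, h⟩, rfl⟩) (fun h => ⟨_, ⟨hxy.symm, h⟩, rfl⟩))
  exact ⟨F ∘ finProdFinEquiv.symm, hF.comp_equiv _⟩

/-- Every `k`-degenerate graph has star arboricity at most `2k`: its edge set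
can be partitioned into at most `2k` star forests. -/
theorem stmt8 {V : Type*} [Fintype V] [DecidableEq V] (G : SimpleGraph V)
    (k : ℕ)
    (hdeg : ∃ ord : V ≃ Fin (Fintype.card V),
      ∀ v : V, {u : V | G.Adj v u ∧ ord v < ord u}.ncard ≤ k) :
    ∃ F : Fin (2 * k) → SimpleGraph V,
      (∀ i, IsStarForest (F i) ∧ F i ≤ G) ∧
      (∀ i j, i ≠ j → Disjoint (F i).edgeSet (F j).edgeSet) ∧
      (∀ e ∈ G.edgeSet, ∃ i, e ∈ (F i).edgeSet) :=
  stmt8_general G k hdeg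
end

section
/- Let G be a graph with vertex partition V(G) = V₁ ⊎ ⋯ ⊎ V_r, and let π̂ = max over i,j of π(G[Vᵢ ∪ Vⱼ]). Then π(G) ≤ 13.68·log₂ r + π̂·r. -/
/-!
Three kinds of linear orders of `V` together separate every two disjoint edges. For `t : Fin r`
the pairs `{a, t - a}` of parts form a matching of `K_r`, and the `r` matchings cover all pairs
of parts. For each `t` and each of the `m` orders of a pairwise suitable family of
`G[V_a ∪ V_{t-a}]`, order `V` by the pair containing the part, then by that order: these `m r`
orders separate any two disjoint edges meeting at most two parts. Edges meeting three or more
parts are separated by ordering the parts by a permutation `τ` and each part by a fixed order of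
`V` or its reverse, where `τ` runs over a pairwise suitable and `3`-mixing family of
permutations of `Fin r`. A uniformly random family of size `k = ⌊6.84 log₂ r⌋` works by the
union bound: a `3`-cycle permutes the three pairings of four parts (and the three middles of
three parts) cyclically, so each of the at most `r⁴ / 4` requirements fails with probability
at most `2 / 3`, and `(3 / 2) ^ (k + 1) > r ^ (6.84 log₂ (3 / 2)) ≥ r ^ 4`.
-/

open Finset

section Separation

variable {V W α : Type*} [LinearOrder α]

def SepBy (f : V → α) (e e' : Sym2 V) : Prop :=
  (∀ a ∈ e, ∀ b ∈ e', f a < f b) ∨ (∀ a ∈ e, ∀ b ∈ e', f b < f a)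

def LiesBetween (f : V → α) (p : V) (e : Sym2 V) : Prop :=
  ∃ a ∈ e, ∃ b ∈ e, f a < f p ∧ f p < f b

theorem sepPerm_iff_sepBy {n : ℕ} (σ : V ≃ Fin n) (e e' : Sym2 V) :
    SepPerm σ {x | x ∈ e} {x | x ∈ e'} ↔ SepBy σ e e' :=
  Iff.rfl

theorem SepBy.symm {f : V → α} {e e' : Sym2 V} (h : SepBy f e e') : SepBy f e' e :=
  (Or.symm h).imp (fun h a ha b hb => h b hb a ha) (fun h a ha b hb => h b hb a ha)

theorem sepBy_mk_mk {f : V → α} {a b c d : V} :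
    SepBy f s(a, b) s(c, d) ↔
      (f a < f c ∧ f a < f d ∧ f b < f c ∧ f b < f d) ∨
        (f c < f a ∧ f d < f a ∧ f c < f b ∧ f d < f b) := by
  simp only [SepBy, Sym2.forall_mem_pair, and_assoc]

theorem liesBetween_mk {f : V → α} {p a b : V} :
    LiesBetween f p s(a, b) ↔ (f a < f p ∧ f p < f b) ∨ (f b < f p ∧ f p < f a) := by
  simp only [LiesBetween, Sym2.mem_iff, exists_eq_or_imp, exists_eq_left]
  constructor
  · rintro ((h | h) | h | h)
    exacts [(lt_asymm h.1 h.2).elim, .inl h, .inr h, (lt_asymm h.1 h.2).elim]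
  · rintro (h | h)
    exacts [.inl (.inr h), .inr (.inl h)]

theorem sepBy_comp (f : W → α) (g : V → W) (e e' : Sym2 V) :
    SepBy (f ∘ g) e e' ↔ SepBy f (e.map g) (e'.map g) := by
  simp only [SepBy, Sym2.mem_map, forall_exists_index, and_imp, forall_apply_eq_imp_iff₂,
    Function.comp_apply]

theorem liesBetween_comp (f : W → α) (g : V → W) (p : V) (e : Sym2 V) :
    LiesBetween (f ∘ g) p e ↔ LiesBetween f (g p) (e.map g) := by
  simp only [LiesBetween, Sym2.mem_map, exists_exists_and_eq_and, Function.comp_apply]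

theorem SepBy.mono {β : Type*} [LinearOrder β] {f : V → α} {g : V → β} {s : Set V}
    {e e' : Sym2 V} (he : ∀ v ∈ e, v ∈ s) (he' : ∀ v ∈ e', v ∈ s)
    (hfg : ∀ u ∈ s, ∀ v ∈ s, f u < f v → g u < g v) (h : SepBy f e e') : SepBy g e e' :=
  h.imp (fun h a ha b hb => hfg _ (he a ha) _ (he' b hb) (h a ha b hb))
    (fun h a ha b hb => hfg _ (he' b hb) _ (he a ha) (h a ha b hb))

theorem sepBy_or_sepBy_or_sepBy {f : V → α} (hf : Function.Injective f) {a b c d : V}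
    (hab : a ≠ b) (hac : a ≠ c) (had : a ≠ d) (hbc : b ≠ c) (hbd : b ≠ d) (hcd : c ≠ d) :
    SepBy f s(a, b) s(c, d) ∨ SepBy f s(a, c) s(d, b) ∨ SepBy f s(a, d) s(b, c) := by
  -- the pairing that puts the two smallest values together is separated
  simp only [sepBy_mk_mk]
  rcases (hf.ne hab).lt_or_gt with h₁ | h₁ <;> rcases (hf.ne hac).lt_or_gt with h₂ | h₂ <;>
    rcases (hf.ne had).lt_or_gt with h₃ | h₃ <;> rcases (hf.ne hbc).lt_or_gt with h₄ | h₄ <;>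
    rcases (hf.ne hbd).lt_or_gt with h₅ | h₅ <;> rcases (hf.ne hcd).lt_or_gt with h₆ | h₆ <;>
    grind

theorem liesBetween_or_liesBetween_or_liesBetween {f : V → α} (hf : Function.Injective f)
    {a b c : V} (hab : a ≠ b) (hac : a ≠ c) (hbc : b ≠ c) :
    LiesBetween f a s(b, c) ∨ LiesBetween f b s(c, a) ∨ LiesBetween f c s(a, b) := by
  simp only [liesBetween_mk]
  have := hf.ne hab; have := hf.ne hac; have := hf.ne hbc
  grind

end Separation

section Families

variable {ι β α : Type*} [LinearOrder α]

def IsPairwiseSuitable (F : ι → β → α) : Prop :=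
  ∀ e e' : Sym2 β, ¬e.IsDiag → ¬e'.IsDiag → (∀ x, ¬(x ∈ e ∧ x ∈ e')) → ∃ i, SepBy (F i) e e'

def IsThreeMixing (F : ι → β → α) : Prop :=
  ∀ (p : β) (e : Sym2 β), ¬e.IsDiag → p ∉ e → ∃ i, LiesBetween (F i) p e

variable {F : ι → β → α}

theorem IsThreeMixing.exists_sepBy_diag (hF : IsThreeMixing F) {p q q' : β} (hpq : p ≠ q)
    (hpq' : p ≠ q') (hqq' : q ≠ q') : ∃ i, SepBy (F i) s(p, p) s(q, q') := by
  obtain ⟨i, hi⟩ := hF q s(p, q') (by simpa using hpq') (by simp [hpq.symm, hqq'])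
  refine ⟨i, ?_⟩
  rw [liesBetween_mk] at hi
  rw [sepBy_mk_mk]
  rcases hi with ⟨h₁, h₂⟩ | ⟨h₁, h₂⟩
  · exact .inl ⟨h₁, h₁.trans h₂, h₁, h₁.trans h₂⟩
  · exact .inr ⟨h₂, h₁.trans h₂, h₂, h₁.trans h₂⟩

theorem IsPairwiseSuitable.exists_sepBy (hS : IsPairwiseSuitable F) (hM : IsThreeMixing F)
    {e e' : Sym2 β} (hdisj : ∀ x, ¬(x ∈ e ∧ x ∈ e')) (hdiag : ¬(e.IsDiag ∧ e'.IsDiag)) :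
    ∃ i, SepBy (F i) e e' := by
  induction e using Sym2.ind with | _ a b => ?_
  induction e' using Sym2.ind with | _ c d => ?_
  have ha := hdisj a
  have hb := hdisj b
  simp only [Sym2.mem_iff] at ha hb
  simp only [Sym2.mk_isDiag_iff] at hdiag
  by_cases hab : a = b
  · subst hab
    exact hM.exists_sepBy_diag (by grind) (by grind) (by grind)
  by_cases hcd : c = d
  · subst hcd
    obtain ⟨i, hi⟩ := hM.exists_sepBy_diag (p := c) (q := a) (q' := b) (by grind) (by grind) hab
    exact ⟨i, hi.symm⟩
  exact hS _ _ (by simpa using hab) (by simpa using hcd) hdisj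

end Families

section SepDim

variable {V : Type*} [Fintype V] (G : SimpleGraph V)

theorem exists_equiv_fin_lt_iff {α : Type*} [LinearOrder α] {key : V → α}
    (hkey : Function.Injective key) :
    ∃ σ : V ≃ Fin (Fintype.card V), ∀ u v, σ u < σ v ↔ key u < key v := by
  let : LinearOrder V := LinearOrder.lift' key hkey
  exact ⟨(monoEquivOfFin V rfl).symm.toEquiv, fun u v => (monoEquivOfFin V rfl).symm.lt_iff_lt⟩

theorem exists_pwSuitable_of_keys {ι α : Type*} [Fintype ι] [LinearOrder α] (key : ι → V → α)
    (hkey : ∀ i, Function.Injective (key i))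
    (hsep : ∀ e ∈ G.edgeSet, ∀ f ∈ G.edgeSet, (∀ x, ¬(x ∈ e ∧ x ∈ f)) →
      ∃ i, SepBy (key i) e f) :
    ∃ F : Fin (Fintype.card ι) → V ≃ Fin (Fintype.card V), PWSuitable G F := by
  choose σ hσ using fun i => exists_equiv_fin_lt_iff (hkey i)
  refine ⟨fun j => σ ((Fintype.equivFin ι).symm j), fun e he f hf hef => ?_⟩
  obtain ⟨i, hi⟩ := hsep e he f hf hef
  refine ⟨Fintype.equivFin ι i, ?_⟩
  rw [sepPerm_iff_sepBy]
  simp only [Equiv.symm_apply_apply]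
  exact hi.mono (s := Set.univ) (by simp) (by simp) fun u _ v _ => (hσ i u v).2

theorem sepDim_le_of_keys {ι α : Type*} [Fintype ι] [LinearOrder α] (key : ι → V → α)
    (hkey : ∀ i, Function.Injective (key i))
    (hsep : ∀ e ∈ G.edgeSet, ∀ f ∈ G.edgeSet, (∀ x, ¬(x ∈ e ∧ x ∈ f)) →
      ∃ i, SepBy (key i) e f) :
    sepDim G ≤ Fintype.card ι :=
  Nat.sInf_le (exists_pwSuitable_of_keys G key hkey hsep)

theorem exists_pwSuitable :
    ∃ k, ∃ F : Fin k → V ≃ Fin (Fintype.card V), PWSuitable G F := by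
  classical
  let w := Fintype.equivFin V
  refine ⟨_, exists_pwSuitable_of_keys G (fun (e : Sym2 V) v => toLex (decide (v ∉ e), w v))
    (fun e u v huv => w.injective (congrArg (fun x => (ofLex x).2) huv)) ?_⟩
  refine fun e _ f _ hef => ⟨e, .inl fun a ha b hb => Prod.Lex.lt_iff.2 (.inl ?_)⟩
  have hbe : b ∉ e := fun h => hef b ⟨h, hb⟩
  simp [ha, hbe]

theorem exists_pwSuitable_of_sepDim_le {m : ℕ} (h : sepDim G ≤ m) :
    ∃ F : Fin m → V ≃ Fin (Fintype.card V), PWSuitable G F := by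
  obtain ⟨F, hF⟩ := Nat.sInf_mem (exists_pwSuitable G)
  refine ⟨fun i => if hi : (i : ℕ) < sepDim G then F ⟨i, hi⟩ else Fintype.equivFin V,
    fun e he f hf hef => ?_⟩
  obtain ⟨j, hj⟩ := hF e he f hf hef
  exact ⟨⟨j, j.2.trans_le h⟩, by simpa only [dif_pos (show (j : ℕ) < sepDim G from j.2)] using hj⟩

end SepDim

section RankOn

variable {V : Type*} {U : Set V} {n : ℕ}

open Classical in
noncomputable def rankOn (σ : U ≃ Fin n) (v : V) : ℕ :=
  if h : v ∈ U then σ ⟨v, h⟩ else 0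

theorem rankOn_of_mem (σ : U ≃ Fin n) {v : V} (h : v ∈ U) : rankOn σ v = σ ⟨v, h⟩ :=
  dif_pos h

theorem injOn_rankOn (σ : U ≃ Fin n) : Set.InjOn (rankOn σ) U := fun u hu v hv h => by
  rw [rankOn_of_mem σ hu, rankOn_of_mem σ hv] at h
  exact congrArg Subtype.val (σ.injective (Fin.ext h))

theorem PWSuitable.exists_sepBy_rankOn [Fintype V] [Fintype U] {G : SimpleGraph V} {m : ℕ}
    {F : Fin m → U ≃ Fin (Fintype.card U)} (hF : PWSuitable (G.induce U) F) {e f : Sym2 V}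
    (he : e ∈ G.edgeSet) (hf : f ∈ G.edgeSet) (hef : ∀ x, ¬(x ∈ e ∧ x ∈ f))
    (heU : ∀ v ∈ e, v ∈ U) (hfU : ∀ v ∈ f, v ∈ U) : ∃ s, SepBy (rankOn (F s)) e f := by
  induction e using Sym2.ind with | _ x y => ?_
  induction f using Sym2.ind with | _ z w => ?_
  simp only [Sym2.forall_mem_pair] at heU hfU
  obtain ⟨s, hs⟩ := hF s(⟨x, heU.1⟩, ⟨y, heU.2⟩) (by simpa using he)
    s(⟨z, hfU.1⟩, ⟨w, hfU.2⟩) (by simpa using hf) fun u hu => hef u ⟨by aesop, by aesop⟩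
  have hval : rankOn (F s) ∘ Subtype.val = fun u : U => ((F s u : Fin _) : ℕ) :=
    funext fun u => rankOn_of_mem (F s) u.2
  rw [sepPerm_iff_sepBy] at hs
  replace hs := hs.mono (g := fun u => ((F s u : Fin _) : ℕ)) (s := Set.univ) (by simp) (by simp)
    fun u _ v _ h => h
  rw [← hval, sepBy_comp] at hs
  exact ⟨s, by simpa using hs⟩

end RankOn

section Matching

variable {r : ℕ}

theorem eq_min_or_eq_sub_min (t x : Fin r) : x = min x (t - x) ∨ x = t - min x (t - x) := by
  have : NeZero r := ⟨by rintro rfl; exact x.elim0⟩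
  rcases min_choice x (t - x) with h | h <;> rw [h]
  · exact .inl rfl
  · exact .inr (sub_sub_cancel t x).symm

theorem min_add_sub_eq_min {p q x : Fin r} (hx : x = p ∨ x = q) :
    min x (p + q - x) = min p q := by
  have : NeZero r := ⟨by rintro rfl; exact x.elim0⟩
  rcases hx with rfl | rfl
  · rw [add_sub_cancel_left]
  · rw [add_sub_cancel_right, min_comm]

theorem eq_min_or_eq_add_sub_min {p q x : Fin r} (hx : x = p ∨ x = q) :
    x = min p q ∨ x = p + q - min p q := by
  simpa only [min_add_sub_eq_min hx] using eq_min_or_eq_sub_min (p + q) x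

end Matching

section Keys

variable {V : Type*} {r : ℕ} (P : V → Fin r)

/-- The pair `{a, t - a}` of the `t`-th matching containing the part of `v` is named by its
smaller element; inside a pair, vertices are ordered by the rank `ρ` of that pair. -/
def matchingKey (ρ : Fin r → Fin r → V → ℕ) (t : Fin r) (v : V) : Lex (Fin r × ℕ) :=
  toLex (min (P v) (t - P v), ρ (min (P v) (t - P v)) (t - min (P v) (t - P v)) v)

theorem matchingKey_injective {ρ : Fin r → Fin r → V → ℕ}
    (hρ : ∀ i j, Set.InjOn (ρ i j) {v | P v = i ∨ P v = j}) (t : Fin r) :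
    Function.Injective (matchingKey P ρ t) := by
  intro u v huv
  have h₁ : min (P u) (t - P u) = min (P v) (t - P v) := congrArg (fun x => (ofLex x).1) huv
  have h₂ := congrArg (fun x => (ofLex x).2) huv
  simp only [matchingKey, ofLex_toLex, h₁] at h₂
  exact hρ _ _ (h₁ ▸ eq_min_or_eq_sub_min t (P u)) (eq_min_or_eq_sub_min t (P v)) h₂

theorem sepBy_matchingKey {ρ : Fin r → Fin r → V → ℕ} {p q : Fin r} {e f : Sym2 V}
    (he : ∀ v ∈ e, P v = p ∨ P v = q) (hf : ∀ v ∈ f, P v = p ∨ P v = q)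
    (h : SepBy (ρ (min p q) (p + q - min p q)) e f) :
    SepBy (matchingKey P ρ (p + q)) e f :=
  h.mono (s := {v | P v = p ∨ P v = q}) he hf fun u hu v hv huv => by
    simp only [matchingKey, min_add_sub_eq_min hu, min_add_sub_eq_min hv]
    exact Prod.Lex.lt_iff.2 (.inr ⟨rfl, huv⟩)

variable [Fintype V]

noncomputable def partKey (τ : Fin r → Fin r) (d : Bool) (v : V) : Lex (Fin r × ℕ) :=
  toLex (τ (P v), if d then (Fintype.equivFin V v : ℕ) else (Fintype.equivFin V v).rev)

theorem partKey_injective (τ : Fin r → Fin r) (d : Bool) :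
    Function.Injective (partKey P τ d) := by
  intro u v huv
  have h := congrArg (fun x => (ofLex x).2) huv
  apply (Fintype.equivFin V).injective
  cases d
  · exact Fin.rev_injective (Fin.ext h)
  · exact Fin.ext h

theorem partKey_lt_of_lt {τ : Fin r → Fin r} (d : Bool) {u v : V} (h : τ (P u) < τ (P v)) :
    partKey P τ d u < partKey P τ d v :=
  Prod.Lex.lt_iff.2 (.inl h)

theorem exists_partKey_lt (τ : Fin r → Fin r) {u v : V} (huv : u ≠ v) (hP : P u = P v) :
    ∃ d, partKey P τ d u < partKey P τ d v := by
  have hne := (Fintype.equivFin V).injective.ne huv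
  refine (hne.lt_or_gt).elim (fun h => ⟨true, ?_⟩) (fun h => ⟨false, ?_⟩) <;>
    refine Prod.Lex.lt_iff.2 (.inr ⟨by simp [partKey, hP], ?_⟩)
  · simpa [partKey] using h
  · exact Fin.rev_lt_rev.2 h

theorem sepBy_partKey {τ : Fin r → Fin r} {e f : Sym2 V} (h : SepBy τ (e.map P) (f.map P))
    (d : Bool) : SepBy (partKey P τ d) e f :=
  ((sepBy_comp τ P e f).2 h).mono (s := Set.univ) (by simp) (by simp)
    fun _ _ _ _ => partKey_lt_of_lt P d

theorem exists_sepBy_partKey {τ : Fin r → Fin r} {x y z w : V} (hxz : x ≠ z) (hP : P x = P z)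
    (h : LiesBetween τ (P x) s(P y, P w)) : ∃ d, SepBy (partKey P τ d) s(x, y) s(z, w) := by
  have hτ : τ (P x) = τ (P z) := congrArg τ hP
  rw [liesBetween_mk] at h
  rcases h with ⟨h₁, h₂⟩ | ⟨h₁, h₂⟩
  · obtain ⟨d, hd⟩ := exists_partKey_lt P τ hxz hP
    refine ⟨d, sepBy_mk_mk.2 (.inl ⟨hd, ?_, ?_, ?_⟩)⟩ <;>
      apply partKey_lt_of_lt <;> order
  · obtain ⟨d, hd⟩ := exists_partKey_lt P τ hxz.symm hP.symm
    refine ⟨d, sepBy_mk_mk.2 (.inr ⟨hd, ?_, ?_, ?_⟩)⟩ <;>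
      apply partKey_lt_of_lt <;> order

end Keys

section Partition

variable {V : Type*} {r : ℕ} (P : V → Fin r)

theorem parts_trichotomy (e f : Sym2 V) :
    (∃ p q, (∀ v ∈ e, P v = p ∨ P v = q) ∧ ∀ v ∈ f, P v = p ∨ P v = q) ∨
    ((∀ a, ¬(a ∈ e.map P ∧ a ∈ f.map P)) ∧ ¬((e.map P).IsDiag ∧ (f.map P).IsDiag)) ∨
    ∃ x y z w, e = s(x, y) ∧ f = s(z, w) ∧ P x = P z ∧ P x ≠ P y ∧ P x ≠ P w ∧ P y ≠ P w := by
  by_cases hA : ∃ p q, (∀ v ∈ e, P v = p ∨ P v = q) ∧ ∀ v ∈ f, P v = p ∨ P v = q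
  · exact .inl hA
  refine .inr ?_
  by_cases hshare : ∃ x ∈ e, ∃ z ∈ f, P x = P z
  · obtain ⟨x, hx, z, hz, hxz⟩ := hshare
    obtain ⟨y, rfl⟩ := Sym2.mem_iff_exists.1 hx
    obtain ⟨w, rfl⟩ := Sym2.mem_iff_exists.1 hz
    simp only [Sym2.forall_mem_pair, not_exists] at hA
    refine .inr ⟨x, y, z, w, rfl, rfl, hxz, fun h => ?_, fun h => ?_, fun h => ?_⟩
    exacts [hA (P x) (P w) (by grind), hA (P x) (P y) (by grind), hA (P x) (P y) (by grind)]
  · push Not at hshare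
    refine .inl ⟨fun a ⟨ha, hb⟩ => ?_, fun ⟨h₁, h₂⟩ => ?_⟩
    · obtain ⟨x, hx, rfl⟩ := Sym2.mem_map.1 ha
      obtain ⟨z, hz, hxz⟩ := Sym2.mem_map.1 hb
      exact hshare x hx z hz hxz.symm
    · induction e using Sym2.ind with | _ x y => ?_
      induction f using Sym2.ind with | _ z w => ?_
      simp only [Sym2.map_mk, Sym2.mk_isDiag_iff] at h₁ h₂
      exact hA ⟨P x, P z, by simp [h₁, h₂]⟩

variable [Fintype V] (G : SimpleGraph V)

theorem exists_sepBy_matchingKey_or_partKey {m k : ℕ} (ρ : Fin m → Fin r → Fin r → V → ℕ)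
    (hρ : ∀ i j, ∀ e ∈ G.edgeSet, ∀ f ∈ G.edgeSet, (∀ x, ¬(x ∈ e ∧ x ∈ f)) →
      (∀ v ∈ e, P v = i ∨ P v = j) → (∀ v ∈ f, P v = i ∨ P v = j) → ∃ s, SepBy (ρ s i j) e f)
    {τ : Fin k → Fin r → Fin r} (hS : IsPairwiseSuitable τ) (hM : IsThreeMixing τ)
    {e f : Sym2 V} (he : e ∈ G.edgeSet) (hf : f ∈ G.edgeSet) (hef : ∀ x, ¬(x ∈ e ∧ x ∈ f)) :
    (∃ s t, SepBy (matchingKey P (ρ s) t) e f) ∨ ∃ i d, SepBy (partKey P (τ i) d) e f := by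
  rcases parts_trichotomy P e f with ⟨p, q, hep, hfq⟩ | ⟨hdisj, hdiag⟩ |
    ⟨x, y, z, w, rfl, rfl, hxz, hxy, hxw, hyw⟩
  · obtain ⟨s, hs⟩ := hρ _ _ _ he _ hf hef (fun v hv => eq_min_or_eq_add_sub_min (hep v hv))
      (fun v hv => eq_min_or_eq_add_sub_min (hfq v hv))
    exact .inl ⟨s, p + q, sepBy_matchingKey P hep hfq hs⟩
  · obtain ⟨i, hi⟩ := hS.exists_sepBy hM hdisj hdiag
    exact .inr ⟨i, true, sepBy_partKey P hi true⟩
  · obtain ⟨i, hi⟩ := hM (P x) s(P y, P w) (by simpa using hyw) (by simp [hxy, hxw])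
    obtain ⟨d, hd⟩ := exists_sepBy_partKey P (fun h => hef x (by simp [h])) hxz hi
    exact .inr ⟨i, d, hd⟩

theorem sepDim_le_of_partition {m k : ℕ}
    (hm : ∀ i j : Fin r, sepDim (G.induce {v : V | P v = i ∨ P v = j}) ≤ m)
    (τ : Fin k → Equiv.Perm (Fin r)) (hS : IsPairwiseSuitable fun i => ⇑(τ i))
    (hM : IsThreeMixing fun i => ⇑(τ i)) :
    sepDim G ≤ m * r + k * 2 := by
  choose Gf hGf using fun i j => exists_pwSuitable_of_sepDim_le _ (hm i j)
  let ρ : Fin m → Fin r → Fin r → V → ℕ := fun s i j => rankOn (Gf i j s)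
  let key : (Fin m × Fin r) ⊕ (Fin k × Bool) → V → Lex (Fin r × ℕ) :=
    Sum.elim (fun st => matchingKey P (ρ st.1) st.2) fun id => partKey P (τ id.1) id.2
  have hkey : ∀ i, Function.Injective (key i) := by
    rintro (⟨s, t⟩ | ⟨i, d⟩)
    · exact matchingKey_injective P (fun i j => injOn_rankOn (Gf i j s)) t
    · exact partKey_injective P (τ i) d
  have hsep : ∀ e ∈ G.edgeSet, ∀ f ∈ G.edgeSet, (∀ x, ¬(x ∈ e ∧ x ∈ f)) →
      ∃ i, SepBy (key i) e f := fun e he f hf hef => by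
    rcases exists_sepBy_matchingKey_or_partKey P G ρ
      (fun i j _ he _ hf hef hei hfj => (hGf i j).exists_sepBy_rankOn he hf hef hei hfj)
      hS hM he hf hef with ⟨s, t, h⟩ | ⟨i, d, h⟩
    exacts [⟨.inl (s, t), h⟩, ⟨.inr (i, d), h⟩]
  simpa using sepDim_le_of_keys G key hkey hsep

end Partition

section Counting

variable {S : Type*} [Fintype S] [DecidableEq S]

theorem card_le_mul_card_of_forall_exists_pow_mem (g : Equiv.Perm S) (A : Finset S) {n : ℕ}
    (h : ∀ σ, ∃ j < n, (g ^ j) σ ∈ A) : Fintype.card S ≤ n * #A := calc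
  Fintype.card S = #(univ : Finset S) := card_univ.symm
  _ ≤ #((range n).biUnion fun j => A.map (g ^ j).symm.toEmbedding) := card_le_card fun σ _ => by
      obtain ⟨j, hj, hσ⟩ := h σ
      exact mem_biUnion.2 ⟨j, mem_range.2 hj, mem_map_equiv.2 (by simpa using hσ)⟩
  _ ≤ ∑ j ∈ range n, #(A.map (g ^ j).symm.toEmbedding) := card_biUnion_le
  _ = n * #A := by simp

theorem exists_forall_exists_mem_of_card_compl_le [Nonempty S] (E : Finset (Finset S)) {a b k : ℕ}
    (hE : ∀ A ∈ E, b * #Aᶜ ≤ a * Fintype.card S) (hk : #E * a ^ k < b ^ k) :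
    ∃ F : Fin k → S, ∀ A ∈ E, ∃ i, F i ∈ A := by
  by_contra! hF
  have hcover : (univ : Finset (Fin k → S)) ⊆ E.biUnion fun A => Fintype.piFinset fun _ => Aᶜ :=
    fun F _ => by
      obtain ⟨A, hA, hFA⟩ := hF F
      exact mem_biUnion.2 ⟨A, hA, Fintype.mem_piFinset.2 fun i => mem_compl.2 (hFA i)⟩
  have hcard : Fintype.card S ^ k ≤ ∑ A ∈ E, #Aᶜ ^ k := by
    simpa using (card_le_card hcover).trans card_biUnion_le
  have key : b ^ k * Fintype.card S ^ k ≤ #E * a ^ k * Fintype.card S ^ k := calc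
    b ^ k * Fintype.card S ^ k ≤ ∑ A ∈ E, (b * #Aᶜ) ^ k := by
        simpa only [mul_sum, mul_pow] using Nat.mul_le_mul_left (b ^ k) hcard
    _ ≤ ∑ A ∈ E, (a * Fintype.card S) ^ k := sum_le_sum fun A hA => Nat.pow_le_pow_left (hE A hA) k
    _ = #E * a ^ k * Fintype.card S ^ k := by rw [sum_const, smul_eq_mul, mul_pow, mul_assoc]
  exact (Nat.le_of_mul_le_mul_right key (by positivity)).not_gt hk

end Counting

section MixingFamily

open Equiv

variable {r : ℕ}

open Classical in
theorem card_perm_le_three_mul_card_sepBy {e e' : Sym2 (Fin r)} (he : ¬e.IsDiag)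
    (he' : ¬e'.IsDiag) (hee' : ∀ x, ¬(x ∈ e ∧ x ∈ e')) :
    Fintype.card (Perm (Fin r)) ≤ 3 * #{σ : Perm (Fin r) | SepBy σ e e'} := by
  induction e using Sym2.ind with | _ a b => ?_
  induction e' using Sym2.ind with | _ c d => ?_
  simp only [Sym2.mk_isDiag_iff, Sym2.mem_iff] at he he' hee'
  have hac : a ≠ c := fun h => hee' a (by simp [h])
  have had : a ≠ d := fun h => hee' a (by simp [h])
  have hbc : b ≠ c := fun h => hee' b (by simp [h])
  have hbd : b ≠ d := fun h => hee' b (by simp [h])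
  -- right multiplication by the `3`-cycle `b ↦ c ↦ d ↦ b` runs through the three pairings
  let π : Perm (Fin r) := swap b c * swap c d
  have hπa : π a = a := by
    rw [Perm.mul_apply, swap_apply_of_ne_of_ne hac had, swap_apply_of_ne_of_ne he hac]
  have hπb : π b = c := by
    rw [Perm.mul_apply, swap_apply_of_ne_of_ne hbc hbd, swap_apply_left]
  have hπc : π c = d := by
    rw [Perm.mul_apply, swap_apply_left, swap_apply_of_ne_of_ne hbd.symm (Ne.symm he')]
  have hπd : π d = b := by
    rw [Perm.mul_apply, swap_apply_right, swap_apply_right]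
  have hπ : ∀ σ : Perm (Fin r), SepBy (σ * π) s(a, b) s(c, d) ↔ SepBy σ s(a, c) s(d, b) :=
    fun σ => by rw [Perm.coe_mul, sepBy_comp, Sym2.map_mk, Sym2.map_mk, hπa, hπb, hπc, hπd]
  have hπ2 : ∀ σ : Perm (Fin r), SepBy (σ * π * π) s(a, b) s(c, d) ↔ SepBy σ s(a, d) s(b, c) :=
    fun σ => by rw [hπ, Perm.coe_mul, sepBy_comp, Sym2.map_mk, Sym2.map_mk, hπa, hπb, hπc, hπd]
  refine card_le_mul_card_of_forall_exists_pow_mem (Equiv.mulRight π) _ fun σ => ?_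
  rcases sepBy_or_sepBy_or_sepBy σ.injective he hac had hbc hbd he' with h | h | h
  · exact ⟨0, by norm_num, by simpa using h⟩
  · exact ⟨1, by norm_num, by simpa using (hπ σ).2 h⟩
  · exact ⟨2, by norm_num, by simpa [sq] using (hπ2 σ).2 h⟩

open Classical in
theorem card_perm_le_three_mul_card_liesBetween {p : Fin r} {e : Sym2 (Fin r)}
    (he : ¬e.IsDiag) (hp : p ∉ e) :
    Fintype.card (Perm (Fin r)) ≤ 3 * #{σ : Perm (Fin r) | LiesBetween σ p e} := by
  induction e using Sym2.ind with | _ q q' => ?_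
  simp only [Sym2.mk_isDiag_iff, Sym2.mem_iff, not_or] at he hp
  obtain ⟨hpq, hpq'⟩ := hp
  let π : Perm (Fin r) := swap p q * swap q q'
  have hπp : π p = q := by
    rw [Perm.mul_apply, swap_apply_of_ne_of_ne hpq hpq', swap_apply_left]
  have hπq : π q = q' := by
    rw [Perm.mul_apply, swap_apply_left, swap_apply_of_ne_of_ne (Ne.symm hpq') (Ne.symm he)]
  have hπq' : π q' = p := by
    rw [Perm.mul_apply, swap_apply_right, swap_apply_right]
  have hπ : ∀ σ : Perm (Fin r), LiesBetween (σ * π) p s(q, q') ↔ LiesBetween σ q s(q', p) :=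
    fun σ => by rw [Perm.coe_mul, liesBetween_comp, Sym2.map_mk, hπp, hπq, hπq']
  have hπ2 : ∀ σ : Perm (Fin r), LiesBetween (σ * π * π) p s(q, q') ↔ LiesBetween σ q' s(p, q) :=
    fun σ => by rw [hπ, Perm.coe_mul, liesBetween_comp, Sym2.map_mk, hπq, hπq', hπp]
  refine card_le_mul_card_of_forall_exists_pow_mem (Equiv.mulRight π) _ fun σ => ?_
  rcases liesBetween_or_liesBetween_or_liesBetween σ.injective hpq hpq' he with h | h | h
  · exact ⟨0, by norm_num, by simpa using h⟩
  · exact ⟨1, by norm_num, by simpa using (hπ σ).2 h⟩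
  · exact ⟨2, by norm_num, by simpa [sq] using (hπ2 σ).2 h⟩

variable (r) in
open Classical in
noncomputable def suitabilityEvents : Finset (Finset (Perm (Fin r))) :=
  (({ee : Sym2 (Fin r) × Sym2 (Fin r) |
      ¬ee.1.IsDiag ∧ ¬ee.2.IsDiag ∧ ∀ x, ¬(x ∈ ee.1 ∧ x ∈ ee.2)} : Finset _).image
    fun ee => ({σ : Perm (Fin r) | SepBy σ ee.1 ee.2} : Finset _)) ∪
  (({pe : Fin r × Sym2 (Fin r) | ¬pe.2.IsDiag ∧ pe.1 ∉ pe.2} : Finset _).image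
    fun pe => ({σ : Perm (Fin r) | LiesBetween σ pe.1 pe.2} : Finset _))

theorem four_mul_card_suitabilityEvents_le : 4 * #(suitabilityEvents r) ≤ r ^ 4 := by
  classical
  let D : Finset (Sym2 (Fin r)) := {e | ¬e.IsDiag}
  have hcard : #(suitabilityEvents r) ≤ #D * #D + r * #D := by
    refine (card_union_le _ _).trans (add_le_add (card_image_le.trans ?_) (card_image_le.trans ?_))
    · exact (card_le_card fun ee => by simp +contextual [D]).trans (card_product D D).le
    · exact (card_le_card (t := univ ×ˢ D) fun pe => by simp +contextual [D]).trans (by simp)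
  have hD : 2 * #D + r = r * r := by
    rw [← Fintype.card_subtype, Sym2.card_subtype_not_diag, Fintype.card_fin, Nat.choose_two_right,
      Nat.mul_div_cancel' (Nat.even_mul_pred_self r).two_dvd, Nat.mul_sub_one,
      Nat.sub_add_cancel (Nat.le_mul_self r)]
  nlinarith

theorem card_perm_le_three_mul_card_of_mem_suitabilityEvents {A : Finset (Perm (Fin r))}
    (hA : A ∈ suitabilityEvents r) : Fintype.card (Perm (Fin r)) ≤ 3 * #A := by
  simp only [suitabilityEvents, mem_union, mem_image, mem_filter, mem_univ, true_and] at hA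
  rcases hA with ⟨⟨e, e'⟩, ⟨he, he', hee'⟩, rfl⟩ | ⟨⟨p, e⟩, ⟨he, hp⟩, rfl⟩
  exacts [card_perm_le_three_mul_card_sepBy he he' hee',
    card_perm_le_three_mul_card_liesBetween he hp]

theorem exists_isPairwiseSuitable_isThreeMixing {k : ℕ} (hk : r ^ 4 * 2 ^ k < 4 * 3 ^ k) :
    ∃ τ : Fin k → Perm (Fin r),
      IsPairwiseSuitable (fun i => ⇑(τ i)) ∧ IsThreeMixing (fun i => ⇑(τ i)) := by
  have hevents := Nat.mul_le_mul_right (2 ^ k) (four_mul_card_suitabilityEvents_le (r := r))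
  obtain ⟨τ, hτ⟩ := exists_forall_exists_mem_of_card_compl_le (a := 2) (b := 3) (k := k)
    (suitabilityEvents r)
    (fun A hA => by
      have := card_perm_le_three_mul_card_of_mem_suitabilityEvents hA
      rw [card_compl]
      omega)
    (by rw [mul_assoc] at hevents; omega)
  refine ⟨τ, fun e e' he he' hee' => ?_, fun p e he hp => ?_⟩
  · obtain ⟨i, hi⟩ := hτ _ (mem_union_left _ (mem_image_of_mem _ (a := (e, e'))
      (by simp only [mem_filter, mem_univ, true_and]; exact ⟨he, he', hee'⟩)))
    exact ⟨i, by simpa using hi⟩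
  · obtain ⟨i, hi⟩ := hτ _ (mem_union_right _ (mem_image_of_mem _ (a := (p, e))
      (by simp only [mem_filter, mem_univ, true_and]; exact ⟨he, hp⟩)))
    exact ⟨i, by simpa using hi⟩

end MixingFamily

theorem pow_four_mul_two_pow_lt {r k : ℕ} (hk : 6.84 * Real.logb 2 r < k + 1) :
    r ^ 4 * 2 ^ k < 4 * 3 ^ k := by
  rcases Nat.eq_zero_or_pos r with rfl | hr
  · simp
  have hlog2 : 0 < Real.log 2 := Real.log_pos one_lt_two
  -- `6.84 = 4 · 171 / 100` and `log₂ (3 / 2) ≥ 100 / 171`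
  have hlog32 : 100 * Real.log 2 ≤ 171 * Real.log (3 / 2) := by
    have := Real.log_le_log (by positivity) (show (2 : ℝ) ^ 100 ≤ (3 / 2) ^ 171 by norm_num)
    simpa only [Real.log_pow, Nat.cast_ofNat] using this
  rw [Real.logb, mul_div_assoc', div_lt_iff₀ hlog2] at hk
  have hkpos : (0 : ℝ) ≤ k + 1 := by positivity
  have hreal : (r : ℝ) ^ 4 * 2 ^ (k + 1) < 3 ^ (k + 1) := by
    rw [← Real.log_lt_log_iff (by positivity) (by positivity), Real.log_mul (by positivity)
      (by positivity), Real.log_pow, Real.log_pow, Real.log_pow,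
      show (3 : ℝ) = 3 / 2 * 2 by norm_num, Real.log_mul (by norm_num) (by norm_num)]
    push_cast
    nlinarith [mul_le_mul_of_nonneg_left hlog32 hkpos]
  have hnat : r ^ 4 * 2 ^ k * 2 < 3 ^ k * 3 := by
    rw [mul_assoc, ← pow_succ, ← pow_succ]
    exact_mod_cast hreal
  omega

theorem stmt11_general {V : Type*} [Fintype V] (G : SimpleGraph V)
    (r : ℕ) (P : V → Fin r) (m : ℕ)
    (hm : ∀ i j : Fin r, sepDim (G.induce {v : V | P v = i ∨ P v = j}) ≤ m) :
    (sepDim G : ℝ) ≤ 13.68 * Real.logb 2 r + m * r := by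
  set k := ⌊6.84 * Real.logb 2 r⌋₊
  obtain ⟨τ, hS, hM⟩ :=
    exists_isPairwiseSuitable_isThreeMixing (pow_four_mul_two_pow_lt (Nat.lt_floor_add_one _))
  have hG : sepDim G ≤ m * r + k * 2 := sepDim_le_of_partition P G hm τ hS hM
  have hk : (k : ℝ) ≤ 6.84 * Real.logb 2 r :=
    Nat.floor_le (mul_nonneg (by norm_num) (div_nonneg (Real.log_natCast_nonneg r)
      (Real.log_nonneg one_le_two)))
  calc (sepDim G : ℝ) ≤ m * r + k * 2 := by exact_mod_cast hG
    _ ≤ 13.68 * Real.logb 2 r + m * r := by linarith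

/-- Partition lemma: if `V(G)` is partitioned into `r` parts by `P` and the
separation dimension of the subgraph induced on any two parts is at most `m`,
then `π(G) ≤ 13.68·log₂ r + m·r`. -/
theorem stmt11 {V : Type*} [Fintype V] [DecidableEq V] (G : SimpleGraph V)
    (r : ℕ) (P : V → Fin r) (m : ℕ)
    (hm : ∀ i j : Fin r, sepDim (G.induce {v : V | P v = i ∨ P v = j}) ≤ m) :
    (sepDim G : ℝ) ≤ 13.68 * Real.logb 2 r + m * r :=
  stmt11_general G r P m hm
end

section
/- For the complete bipartite graph K_{m,n} with m ≤ n, π(K_{m,n}) ≥ log₂ m. -/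
open Function

theorem exists_sepPerm_of_disjoint {V : Type*} [Fintype V] {A B : Set V} (hAB : Disjoint A B) :
    ∃ σ : V ≃ Fin (Fintype.card V), SepPerm σ A B := by
  classical
  have hcard : Fintype.card A + Fintype.card (Aᶜ : Set V) = Fintype.card V :=
    (Fintype.card_sum ..).symm.trans (Fintype.card_congr (Equiv.Set.sumCompl A))
  let σ : V ≃ Fin (Fintype.card V) :=
    (Equiv.Set.sumCompl A).symm.trans <|
      (Equiv.sumCongr (Fintype.equivFin A) (Fintype.equivFin _)).trans <|
        finSumFinEquiv.trans (finCongr hcard)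
  refine ⟨σ, Or.inl fun a ha b hb => ?_⟩
  have hb' : b ∉ A := Set.disjoint_right.mp hAB hb
  simp only [σ, Equiv.trans_apply, Equiv.Set.sumCompl_symm_apply_of_mem ha,
    Equiv.Set.sumCompl_symm_apply_of_notMem hb', Equiv.sumCongr_apply, Sum.map_inl, Sum.map_inr,
    finSumFinEquiv_apply_left, finSumFinEquiv_apply_right, finCongr_apply, Fin.lt_def, Fin.val_cast,
    Fin.val_castAdd, Fin.val_natAdd]
  omega

theorem pwSuitable_equivFin_symm {V : Type*} [Fintype V] [DecidableEq V] (G : SimpleGraph V) :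
    PWSuitable G (Fintype.equivFin (V ≃ Fin (Fintype.card V))).symm := by
  intro e _ f _ hef
  obtain ⟨σ, hσ⟩ := exists_sepPerm_of_disjoint (A := {x | x ∈ e}) (B := {x | x ∈ f})
    (Set.disjoint_left.mpr fun x hxe hxf => hef x ⟨hxe, hxf⟩)
  exact ⟨Fintype.equivFin _ σ, by rwa [Equiv.symm_apply_apply]⟩

theorem exists_pwSuitable_sepDim {V : Type*} [Fintype V] (G : SimpleGraph V) :
    ∃ F : Fin (sepDim G) → (V ≃ Fin (Fintype.card V)), PWSuitable G F := by
  classical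
  exact Nat.sInf_mem (s := {k | ∃ F : Fin k → (V ≃ Fin (Fintype.card V)), PWSuitable G F})
    ⟨_, _, pwSuitable_equivFin_symm G⟩

theorem card_le_two_pow_of_pwSuitable {V α : Type*} [Fintype V] [Fintype α] {G : SimpleGraph V}
    {k : ℕ} {F : Fin k → (V ≃ Fin (Fintype.card V))} (hF : PWSuitable G F)
    {u w : α → V} (hu : Injective u) (hw : Injective w) (hadj : ∀ a b, G.Adj (u a) (w b)) :
    Fintype.card α ≤ 2 ^ k := by
  classical
  let code : α → Fin k → Bool := fun a i => decide (F i (u a) < F i (w a))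
  suffices Injective code by simpa using Fintype.card_le_of_injective code this
  intro a a' hcode
  by_contra hne
  have hdisj : ∀ x, ¬(x ∈ s(u a, w a') ∧ x ∈ s(u a', w a)) := by
    rintro x ⟨hx, hx'⟩
    simp only [Sym2.mem_iff] at hx hx'
    rcases hx with rfl | rfl <;> rcases hx' with h | h
    · exact hne (hu h)
    · exact (hadj a a).ne h
    · exact (hadj a' a').ne h.symm
    · exact hne (hw h).symm
  have hcode_i : ∀ i, F i (u a) < F i (w a) ↔ F i (u a') < F i (w a') := fun i => by
    simpa [code] using congrFun hcode i
  obtain ⟨i, hsep | hsep⟩ := hF _ (hadj a a') _ (hadj a' a) hdisj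
  · exact lt_asymm ((hcode_i i).mp (hsep _ (by simp) _ (by simp))) (hsep _ (by simp) _ (by simp))
  · exact lt_asymm ((hcode_i i).mpr (hsep _ (by simp) _ (by simp))) (hsep _ (by simp) _ (by simp))

/-- For the complete bipartite graph `K_{m,n}` with `m ≤ n`,
`π(K_{m,n}) ≥ log₂ m`. -/
theorem stmt15 (m n : ℕ) (h : m ≤ n) :
    Real.logb 2 m ≤ (sepDim (completeBipartiteGraph (Fin m) (Fin n)) : ℝ) := by
  obtain ⟨F, hF⟩ := exists_pwSuitable_sepDim (completeBipartiteGraph (Fin m) (Fin n))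
  have hm : m ≤ 2 ^ sepDim (completeBipartiteGraph (Fin m) (Fin n)) := by
    simpa using card_le_two_pow_of_pwSuitable hF Sum.inl_injective
      (Sum.inr_injective.comp (Fin.castLE_injective h)) fun a b => by simp
  rcases m.eq_zero_or_pos with rfl | hm0
  · simp
  rw [Real.logb_le_iff_le_rpow one_lt_two (by exact_mod_cast hm0)]
  exact_mod_cast hm
end
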